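/- arXiv:0906.3812 — 6 statements merged into one kernel-verified Lean document; each statement's English description precedes it below -/
import Mathlib

section
/- (Abstract three-energy decay lemma) For every C > 0 and J0 > 0 there exist constants c3 ∈ (0,1) and c4 > 0, depending only on (C, J0), with the following property. Let t0 < t* ≤ −1, J ≥ J0, c1 ≥ 0 and 0 ≤ c* ≤ c3. Let E1, E2, E3 : [t0,t*] → [0,∞) be continuous, set E = E1 + E2 + E3, and for τ ∈ [t0,t*] put τ₋ = max{t0, τ−2}. Assume that for every τ ∈ [t0,t*]: E1(τ) − E1(τ₋) ≤ C · ∫_{τ₋}^{τ} (1/|t|) · √(E1(t)) · ( c*·√(E(t)) + c1·|t|^{−J} ) dt; E2(τ) − E2(t0) ≤ C · ∫_{τ₋}^{τ} √(E2(t)) · ( √(E1(t)) + c*·√(E(t)) + c1·|t|^{−J} ) dt; E3(τ) − E3(τ₋) ≤ C · ∫_{τ₋}^{τ} (1/|t|) · √(E3(t)) · ( √(E2(t)) + c*·√(E(t)) + c1·|t|^{−J} ) dt. Then for all τ ∈ [t0,t*]: √(E(τ)) ≤ c4 · ( |t0|^J · √(E(t0)) + c1 ) / |τ|^J. -/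
/-!
Let `M` be the maximum of `|t| ^ J * √E t` on `[t0, t*]` and `D = |t0| ^ J * √E t0 + c1`, and
suppose `M > δ⁻⁴ D`, where `c* ≤ δ⁴`. Inserting `√E ≤ M |t|^(-J)` into the right-hand sides, the
forcing `c* √E + c1 |t|^(-J)` is `O(δ⁴)`, so `E1 = O(δ⁴)`; this makes the source `√E1` of `E2`
of size `O(δ²)`, so `E2 = O(δ²)`, and then `E3 = O(δ)`, all in units of `M² |t|^(-2J)`.
The weight `1/|t|` keeps the `E1`- and `E3`-integrals over all of `[t0, τ]` of size
`|τ|^(-2J) / J`, while `E2` only sees a window of length `2`. Hence `E ≤ M² |t|^(-2J) / 2`,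
which at the maximum forces `M = 0`.
-/

open Set MeasureTheory intervalIntegral

theorem IntervalIntegrable.mono_set_of_le {E : Type*} [NormedAddCommGroup E] {f : ℝ → E}
    {μ : Measure ℝ} {a b c d : ℝ}
    (hf : IntervalIntegrable f μ a b) (hac : a ≤ c) (hcd : c ≤ d) (hdb : d ≤ b) :
    IntervalIntegrable f μ c d :=
  hf.mono_set <| uIcc_subset_uIcc (mem_uIcc_of_le hac (hcd.trans hdb))
    (mem_uIcc_of_le (hac.trans hcd) hdb)

theorem sub_le_mul_integral_of_window_le {F g : ℝ → ℝ} {C L t0 tstar : ℝ} (hL : 0 < L)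
    (hg : IntervalIntegrable g volume t0 tstar)
    (h : ∀ τ ∈ Icc t0 tstar,
      F τ - F (max t0 (τ - L)) ≤ C * ∫ t in max t0 (τ - L)..τ, g t) :
    ∀ τ ∈ Icc t0 tstar, F τ - F t0 ≤ C * ∫ t in t0..τ, g t := by
  have hsteps : ∀ n : ℕ, ∀ τ ∈ Icc t0 tstar, τ ≤ t0 + n * L →
      F τ - F t0 ≤ C * ∫ t in t0..τ, g t := by
    intro n
    induction n with
    | zero =>
      intro τ hτ hτn
      obtain rfl : τ = t0 := le_antisymm (by simpa using hτn) hτ.1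
      simp
    | succ n ih =>
      intro τ hτ hτn
      set σ := max t0 (τ - L)
      have hστ : σ ≤ τ := max_le hτ.1 (by linarith)
      have hσ : σ ∈ Icc t0 tstar := ⟨le_max_left _ _, hστ.trans hτ.2⟩
      have hσn := ih σ hσ (max_le (by nlinarith [n.cast_nonneg (α := ℝ)])
        (by push_cast at hτn; linarith))
      rw [← integral_add_adjacent_intervals (hg.mono_set_of_le le_rfl hσ.1 hσ.2)
        (hg.mono_set_of_le hσ.1 hστ hτ.2), mul_add]
      linarith [h τ hτ]
  intro τ hτ
  obtain ⟨n, hn⟩ := exists_nat_ge ((τ - t0) / L)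
  exact hsteps n τ hτ (by rw [div_le_iff₀ hL] at hn; linarith)

theorem abs_rpow_neg_le_of_le {J t s : ℝ} (hJ : 0 ≤ J) (hts : t ≤ s) (hs : s < 0) :
    |t| ^ (-J) ≤ |s| ^ (-J) :=
  Real.rpow_le_rpow_of_nonpos (abs_pos.mpr hs.ne)
    (by rw [abs_of_neg hs, abs_of_neg (hts.trans_lt hs)]; linarith) (by linarith)

theorem integral_abs_rpow_sq_div_abs_le {J t0 s : ℝ} (hJ : 0 < J) (hts : t0 ≤ s) (hs : s < 0) :
    ∫ t in t0..s, (|t| ^ (-J)) ^ 2 / |t| ≤ (|s| ^ (-J)) ^ 2 / (2 * J) := by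
  have hpow : ∀ {x : ℝ}, 0 < x → (x ^ (-J)) ^ 2 = x ^ (-(2 * J)) := fun hx => by
    rw [← Real.rpow_mul_natCast hx.le]; ring_nf
  have hcongr : ∫ t in t0..s, (|t| ^ (-J)) ^ 2 / |t| = ∫ t in t0..s, (-t) ^ (-(2 * J) - 1) :=
    integral_congr fun t ht => by
      have ht0 : 0 < -t := by rw [uIcc_of_le hts] at ht; linarith [ht.2]
      simp only [abs_of_neg (neg_pos.mp ht0), hpow ht0, Real.rpow_sub_one ht0.ne']
  have h0 : (0 : ℝ) ∉ uIcc (-s) (-t0) := by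
    rw [uIcc_of_le (neg_le_neg hts)]; intro h0; linarith [h0.1]
  rw [hcongr, integral_comp_neg (fun x => x ^ (-(2 * J) - 1)),
    integral_rpow (Or.inr ⟨by linarith, h0⟩), abs_of_neg hs, hpow (neg_pos.mpr hs),
    sub_add_cancel, div_neg, ← neg_div, neg_sub]
  have : 0 ≤ (-t0) ^ (-(2 * J)) := Real.rpow_nonneg (by linarith) _
  gcongr
  linarith

theorem rpow_mul_mul_rpow_neg {x : ℝ} (hx : 0 < x) (J y : ℝ) : x ^ J * y * x ^ (-J) = y := by
  rw [Real.rpow_neg hx.le, mul_right_comm, mul_inv_cancel₀ (Real.rpow_pos_of_pos hx J).ne',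
    one_mul]

theorem mul_le_mul_mul_sq_of_le_mul {a b P Q w : ℝ} (hb0 : 0 ≤ b) (hPw : 0 ≤ P * w)
    (ha : a ≤ P * w) (hb : b ≤ Q * w) : a * b ≤ P * Q * w ^ 2 :=
  (mul_le_mul ha hb hb0 hPw).trans_eq (by ring)

theorem le_add_of_sub_le_integral_div_abs {F a b : ℝ → ℝ} {C J P Q t0 s : ℝ}
    (hC : 0 ≤ C) (hJ : 0 < J) (hP : 0 ≤ P) (hQ : 0 ≤ Q) (hts : t0 ≤ s) (hs : s < 0)
    (hint : IntervalIntegrable (fun t => 1 / |t| * a t * b t) volume t0 s)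
    (hF : F s - F t0 ≤ C * ∫ t in t0..s, 1 / |t| * a t * b t)
    (ha : ∀ t ∈ Icc t0 s, a t ≤ P * |t| ^ (-J)) (hb0 : ∀ t ∈ Icc t0 s, 0 ≤ b t)
    (hb : ∀ t ∈ Icc t0 s, b t ≤ Q * |t| ^ (-J)) :
    F s ≤ F t0 + C * (P * Q) / (2 * J) * (|s| ^ (-J)) ^ 2 := by
  have habs : ∀ t ∈ Icc t0 s, |t| ≠ 0 := fun t ht => abs_ne_zero.mpr (by linarith [ht.2])
  have hpt : ∀ t ∈ Icc t0 s, 1 / |t| * a t * b t ≤ P * Q * ((|t| ^ (-J)) ^ 2 / |t|) :=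
    fun t ht => by
      rw [mul_assoc, one_div_mul_eq_div, ← mul_div_assoc]
      exact div_le_div_of_nonneg_right (mul_le_mul_mul_sq_of_le_mul (hb0 t ht)
        (mul_nonneg hP (Real.rpow_nonneg (abs_nonneg t) _)) (ha t ht) (hb t ht)) (abs_nonneg t)
  have hint' : IntervalIntegrable (fun t => P * Q * ((|t| ^ (-J)) ^ 2 / |t|)) volume t0 s := by
    refine ContinuousOn.intervalIntegrable ?_
    rw [uIcc_of_le hts]
    exact continuousOn_const.mul (((continuous_abs.continuousOn.rpow_const fun t ht =>
      Or.inl (habs t ht)).pow 2).div continuous_abs.continuousOn habs)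
  have hbound := ((integral_mono_on hts hint hint' hpt).trans_eq (integral_const_mul _ _)).trans
    (mul_le_mul_of_nonneg_left (integral_abs_rpow_sq_div_abs_le hJ hts hs) (mul_nonneg hP hQ))
  calc F s ≤ F t0 + C * (P * Q * ((|s| ^ (-J)) ^ 2 / (2 * J))) := by
        linarith [mul_le_mul_of_nonneg_left hbound hC]
    _ = F t0 + C * (P * Q) / (2 * J) * (|s| ^ (-J)) ^ 2 := by ring

theorem le_add_of_sub_le_integral_window {F a b : ℝ → ℝ} {C J L P Q t0 σ s : ℝ}
    (hC : 0 ≤ C) (hJ : 0 ≤ J) (hP : 0 ≤ P) (hQ : 0 ≤ Q) (hσs : σ ≤ s) (hlen : s - σ ≤ L)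
    (hs : s < 0) (hint : IntervalIntegrable (fun t => a t * b t) volume σ s)
    (hF : F s - F t0 ≤ C * ∫ t in σ..s, a t * b t)
    (ha : ∀ t ∈ Icc σ s, a t ≤ P * |t| ^ (-J)) (hb0 : ∀ t ∈ Icc σ s, 0 ≤ b t)
    (hb : ∀ t ∈ Icc σ s, b t ≤ Q * |t| ^ (-J)) :
    F s ≤ F t0 + C * L * (P * Q) * (|s| ^ (-J)) ^ 2 := by
  set B := P * Q * (|s| ^ (-J)) ^ 2
  have hpt : ∀ t ∈ Icc σ s, a t * b t ≤ B := fun t ht => by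
    have hw := Real.rpow_nonneg (abs_nonneg t) (-J)
    refine (mul_le_mul_mul_sq_of_le_mul (hb0 t ht) (mul_nonneg hP hw) (ha t ht) (hb t ht)).trans ?_
    exact mul_le_mul_of_nonneg_left (pow_le_pow_left₀ hw
      (abs_rpow_neg_le_of_le hJ ht.2 hs) 2) (mul_nonneg hP hQ)
  have hbound := (integral_mono_on hσs hint intervalIntegrable_const hpt).trans_eq
    (intervalIntegral.integral_const B)
  rw [smul_eq_mul] at hbound
  nlinarith [mul_le_mul_of_nonneg_left hbound hC,
    mul_le_mul_of_nonneg_right hlen (by positivity : 0 ≤ B)]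

structure ThreeEnergyInequalities (C J c1 cstar t0 tstar : ℝ) (E1 E2 E3 : ℝ → ℝ) : Prop where
  t0_le : t0 ≤ tstar
  tstar_neg : tstar < 0
  c1_nonneg : 0 ≤ c1
  cstar_nonneg : 0 ≤ cstar
  continuousOn₁ : ContinuousOn E1 (Icc t0 tstar)
  continuousOn₂ : ContinuousOn E2 (Icc t0 tstar)
  continuousOn₃ : ContinuousOn E3 (Icc t0 tstar)
  nonneg₁ : ∀ t ∈ Icc t0 tstar, 0 ≤ E1 t
  nonneg₂ : ∀ t ∈ Icc t0 tstar, 0 ≤ E2 t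
  nonneg₃ : ∀ t ∈ Icc t0 tstar, 0 ≤ E3 t
  ineq₁ : ∀ τ ∈ Icc t0 tstar,
    E1 τ - E1 (max t0 (τ - 2)) ≤
      C * ∫ t in (max t0 (τ - 2))..τ, (1 / |t|) * √(E1 t) *
        (cstar * √(E1 t + E2 t + E3 t) + c1 * |t| ^ (-J))
  ineq₂ : ∀ τ ∈ Icc t0 tstar,
    E2 τ - E2 t0 ≤
      C * ∫ t in (max t0 (τ - 2))..τ, √(E2 t) *
        (√(E1 t) + cstar * √(E1 t + E2 t + E3 t) + c1 * |t| ^ (-J))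
  ineq₃ : ∀ τ ∈ Icc t0 tstar,
    E3 τ - E3 (max t0 (τ - 2)) ≤
      C * ∫ t in (max t0 (τ - 2))..τ, (1 / |t|) * √(E3 t) *
        (√(E2 t) + cstar * √(E1 t + E2 t + E3 t) + c1 * |t| ^ (-J))

namespace ThreeEnergyInequalities

variable {C J c1 cstar t0 tstar : ℝ} {E1 E2 E3 : ℝ → ℝ}

theorem abs_pos_of_mem (h : ThreeEnergyInequalities C J c1 cstar t0 tstar E1 E2 E3) {t : ℝ}
    (ht : t ∈ Icc t0 tstar) : 0 < |t| :=
  abs_pos.mpr (ht.2.trans_lt h.tstar_neg).ne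

theorem continuousOn_abs_rpow (h : ThreeEnergyInequalities C J c1 cstar t0 tstar E1 E2 E3)
    (p : ℝ) : ContinuousOn (fun t => |t| ^ p) (Icc t0 tstar) :=
  continuous_abs.continuousOn.rpow_const fun _ ht => Or.inl (h.abs_pos_of_mem ht).ne'

theorem continuousOn_one_div_abs (h : ThreeEnergyInequalities C J c1 cstar t0 tstar E1 E2 E3) :
    ContinuousOn (fun t => 1 / |t|) (Icc t0 tstar) :=
  continuousOn_const.div continuous_abs.continuousOn fun _ ht => (h.abs_pos_of_mem ht).ne'

theorem intervalIntegrable₁ (h : ThreeEnergyInequalities C J c1 cstar t0 tstar E1 E2 E3) :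
    IntervalIntegrable (fun t => (1 / |t|) * √(E1 t) *
      (cstar * √(E1 t + E2 t + E3 t) + c1 * |t| ^ (-J))) volume t0 tstar := by
  have := h.continuousOn₁; have := h.continuousOn₂; have := h.continuousOn₃
  have := h.continuousOn_abs_rpow (-J); have := h.continuousOn_one_div_abs
  exact ContinuousOn.intervalIntegrable (by rw [uIcc_of_le h.t0_le]; fun_prop)

theorem intervalIntegrable₂ (h : ThreeEnergyInequalities C J c1 cstar t0 tstar E1 E2 E3) :
    IntervalIntegrable (fun t => √(E2 t) *
      (√(E1 t) + cstar * √(E1 t + E2 t + E3 t) + c1 * |t| ^ (-J))) volume t0 tstar := by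
  have := h.continuousOn₁; have := h.continuousOn₂; have := h.continuousOn₃
  have := h.continuousOn_abs_rpow (-J)
  exact ContinuousOn.intervalIntegrable (by rw [uIcc_of_le h.t0_le]; fun_prop)

theorem intervalIntegrable₃ (h : ThreeEnergyInequalities C J c1 cstar t0 tstar E1 E2 E3) :
    IntervalIntegrable (fun t => (1 / |t|) * √(E3 t) *
      (√(E2 t) + cstar * √(E1 t + E2 t + E3 t) + c1 * |t| ^ (-J))) volume t0 tstar := by
  have := h.continuousOn₁; have := h.continuousOn₂; have := h.continuousOn₃
  have := h.continuousOn_abs_rpow (-J); have := h.continuousOn_one_div_abs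
  exact ContinuousOn.intervalIntegrable (by rw [uIcc_of_le h.t0_le]; fun_prop)

section Bootstrap

variable {K δ M : ℝ} (h : ThreeEnergyInequalities C J c1 cstar t0 tstar E1 E2 E3)
  (hC : 0 ≤ C) (hJ : 0 < J) (hK : 1 ≤ K) (hCK : C ≤ K) (hCKJ : C ≤ K * J)
  (hδ : 0 ≤ δ) (hKδ : 40 * K ^ 2 * δ ≤ 1) (hcstar : cstar ≤ δ ^ 4) (hc1 : c1 ≤ δ ^ 4 * M)
  (hM0 : 0 ≤ M) (h0 : √(E1 t0 + E2 t0 + E3 t0) ≤ δ ^ 4 * M * |t0| ^ (-J))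
  (hM : ∀ t ∈ Icc t0 tstar, √(E1 t + E2 t + E3 t) ≤ M * |t| ^ (-J))

include hcstar hc1 hM in
theorem cstar_mul_sqrt_energy_add_le {t : ℝ} (ht : t ∈ Icc t0 tstar) :
    cstar * √(E1 t + E2 t + E3 t) + c1 * |t| ^ (-J) ≤ 2 * δ ^ 4 * M * |t| ^ (-J) := by
  have hw : 0 ≤ |t| ^ (-J) := Real.rpow_nonneg (abs_nonneg t) _
  have h1 : cstar * √(E1 t + E2 t + E3 t) ≤ δ ^ 4 * (M * |t| ^ (-J)) :=
    mul_le_mul hcstar (hM t ht) (Real.sqrt_nonneg _) (by positivity)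
  nlinarith [mul_le_mul_of_nonneg_right hc1 hw]

include h hJ hM0 h0 in
theorem energy_t0_le {s : ℝ} (hs : s ∈ Icc t0 tstar) :
    E1 t0 + E2 t0 + E3 t0 ≤ (δ ^ 4 * M * |s| ^ (-J)) ^ 2 := by
  refine (Real.sqrt_le_left (by positivity)).mp (h0.trans ?_)
  exact mul_le_mul_of_nonneg_left (abs_rpow_neg_le_of_le hJ.le hs.1 (hs.2.trans_lt h.tstar_neg))
    (by positivity)

include hM in
theorem sqrt_le_of_le_energy {x t : ℝ} (ht : t ∈ Icc t0 tstar) (hx : x ≤ E1 t + E2 t + E3 t) :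
    √x ≤ M * |t| ^ (-J) :=
  (Real.sqrt_le_sqrt hx).trans (hM t ht)

include h hC hJ hK hCKJ hδ hKδ hcstar hc1 hM0 h0 hM in
theorem sqrt_energy₁_le {s : ℝ} (hs : s ∈ Icc t0 tstar) :
    √(E1 s) ≤ 2 * K * δ ^ 2 * M * |s| ^ (-J) := by
  have hsub : Icc t0 s ⊆ Icc t0 tstar := Icc_subset_Icc_right hs.2
  have hstep := le_add_of_sub_le_integral_div_abs hC hJ hM0 (by positivity : 0 ≤ 2 * δ ^ 4 * M)
    hs.1 (hs.2.trans_lt h.tstar_neg) (h.intervalIntegrable₁.mono_set_of_le le_rfl hs.1 hs.2)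
    (sub_le_mul_integral_of_window_le two_pos h.intervalIntegrable₁ h.ineq₁ s hs)
    (fun t ht => sqrt_le_of_le_energy hM (hsub ht)
      (by linarith [h.nonneg₂ t (hsub ht), h.nonneg₃ t (hsub ht)]))
    (fun t ht => add_nonneg (mul_nonneg h.cstar_nonneg (Real.sqrt_nonneg _))
      (mul_nonneg h.c1_nonneg (Real.rpow_nonneg (abs_nonneg t) _)))
    (fun t ht => cstar_mul_sqrt_energy_add_le hcstar hc1 hM (hsub ht))
  have hinit := h.energy_t0_le hJ hM0 h0 hs
  have hCJ : C / (2 * J) ≤ K := by rw [div_le_iff₀ (by positivity)]; linarith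
  have hcoef : δ ^ 8 + 2 * K * δ ^ 4 ≤ 4 * K ^ 2 * δ ^ 4 := by
    have : δ ^ 8 ≤ δ ^ 4 := pow_le_pow_of_le_one hδ (by nlinarith) (by norm_num)
    nlinarith [mul_le_mul_of_nonneg_right (by nlinarith : 1 + 2 * K ≤ 4 * K ^ 2)
      (pow_nonneg hδ 4)]
  refine (Real.sqrt_le_left (by positivity)).mpr ?_
  calc E1 s ≤ E1 t0 + C / (2 * J) * (2 * δ ^ 4) * (M * |s| ^ (-J)) ^ 2 := by
        convert hstep using 2; ring
    _ ≤ (δ ^ 4 * M * |s| ^ (-J)) ^ 2 + K * (2 * δ ^ 4) * (M * |s| ^ (-J)) ^ 2 := by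
        gcongr
        linarith [h.nonneg₂ t0 ⟨le_rfl, h.t0_le⟩, h.nonneg₃ t0 ⟨le_rfl, h.t0_le⟩]
    _ = (δ ^ 8 + 2 * K * δ ^ 4) * (M * |s| ^ (-J)) ^ 2 := by ring
    _ ≤ 4 * K ^ 2 * δ ^ 4 * (M * |s| ^ (-J)) ^ 2 := by gcongr
    _ = (2 * K * δ ^ 2 * M * |s| ^ (-J)) ^ 2 := by ring

include h hC hJ hK hCK hCKJ hδ hKδ hcstar hc1 hM0 h0 hM in
theorem sqrt_energy₂_le {s : ℝ} (hs : s ∈ Icc t0 tstar) :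
    √(E2 s) ≤ 3 * K * δ * M * |s| ^ (-J) := by
  set σ := max t0 (s - 2)
  have hσs : σ ≤ s := max_le hs.1 (by linarith)
  have hsub : Icc σ s ⊆ Icc t0 tstar := Icc_subset_Icc (le_max_left _ _) hs.2
  have hstep := le_add_of_sub_le_integral_window (L := 2) hC hJ.le hM0
    (by positivity : 0 ≤ (2 * K * δ ^ 2 + 2 * δ ^ 4) * M) hσs
    (by linarith [le_max_right t0 (s - 2)]) (hs.2.trans_lt h.tstar_neg)
    (h.intervalIntegrable₂.mono_set_of_le (le_max_left _ _) hσs hs.2) (h.ineq₂ s hs)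
    (fun t ht => sqrt_le_of_le_energy hM (hsub ht)
      (by linarith [h.nonneg₁ t (hsub ht), h.nonneg₃ t (hsub ht)]))
    (fun t ht => add_nonneg (add_nonneg (Real.sqrt_nonneg _)
      (mul_nonneg h.cstar_nonneg (Real.sqrt_nonneg _)))
      (mul_nonneg h.c1_nonneg (Real.rpow_nonneg (abs_nonneg t) _)))
    (fun t ht => by
      linarith [h.sqrt_energy₁_le hC hJ hK hCKJ hδ hKδ hcstar hc1 hM0 h0 hM (hsub ht),
        cstar_mul_sqrt_energy_add_le hcstar hc1 hM (hsub ht)])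
  have hinit := h.energy_t0_le hJ hM0 h0 hs
  have hcoef : δ ^ 8 + 2 * C * (2 * K * δ ^ 2 + 2 * δ ^ 4) ≤ 9 * K ^ 2 * δ ^ 2 := by
    have hδ1 : δ ≤ 1 := by nlinarith
    have h8 : δ ^ 8 ≤ δ ^ 2 := pow_le_pow_of_le_one hδ hδ1 (by norm_num)
    have h4 : δ ^ 4 ≤ δ ^ 2 := pow_le_pow_of_le_one hδ hδ1 (by norm_num)
    nlinarith [mul_le_mul_of_nonneg_right (by nlinarith : 1 + 4 * K ^ 2 + 4 * K ≤ 9 * K ^ 2)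
      (pow_nonneg hδ 2), mul_le_mul_of_nonneg_right hCK (pow_nonneg hδ 2),
      mul_le_mul_of_nonneg_right hCK (pow_nonneg hδ 4)]
  refine (Real.sqrt_le_left (by positivity)).mpr ?_
  calc E2 s ≤ E2 t0 + 2 * C * (2 * K * δ ^ 2 + 2 * δ ^ 4) * (M * |s| ^ (-J)) ^ 2 := by
        convert hstep using 2; ring
    _ ≤ (δ ^ 4 * M * |s| ^ (-J)) ^ 2
          + 2 * C * (2 * K * δ ^ 2 + 2 * δ ^ 4) * (M * |s| ^ (-J)) ^ 2 := by
        gcongr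
        linarith [h.nonneg₁ t0 ⟨le_rfl, h.t0_le⟩, h.nonneg₃ t0 ⟨le_rfl, h.t0_le⟩]
    _ = (δ ^ 8 + 2 * C * (2 * K * δ ^ 2 + 2 * δ ^ 4)) * (M * |s| ^ (-J)) ^ 2 := by ring
    _ ≤ 9 * K ^ 2 * δ ^ 2 * (M * |s| ^ (-J)) ^ 2 := by gcongr
    _ = (3 * K * δ * M * |s| ^ (-J)) ^ 2 := by ring

include h hC hJ hK hCK hCKJ hδ hKδ hcstar hc1 hM0 h0 hM in
theorem energy₃_le {s : ℝ} (hs : s ∈ Icc t0 tstar) :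
    E3 s ≤ 6 * K ^ 2 * δ * (M * |s| ^ (-J)) ^ 2 := by
  have hsub : Icc t0 s ⊆ Icc t0 tstar := Icc_subset_Icc_right hs.2
  have hstep := le_add_of_sub_le_integral_div_abs hC hJ hM0
    (by positivity : 0 ≤ (3 * K * δ + 2 * δ ^ 4) * M)
    hs.1 (hs.2.trans_lt h.tstar_neg) (h.intervalIntegrable₃.mono_set_of_le le_rfl hs.1 hs.2)
    (sub_le_mul_integral_of_window_le two_pos h.intervalIntegrable₃ h.ineq₃ s hs)
    (fun t ht => sqrt_le_of_le_energy hM (hsub ht)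
      (by linarith [h.nonneg₁ t (hsub ht), h.nonneg₂ t (hsub ht)]))
    (fun t ht => add_nonneg (add_nonneg (Real.sqrt_nonneg _)
      (mul_nonneg h.cstar_nonneg (Real.sqrt_nonneg _)))
      (mul_nonneg h.c1_nonneg (Real.rpow_nonneg (abs_nonneg t) _)))
    (fun t ht => by
      linarith [h.sqrt_energy₂_le hC hJ hK hCK hCKJ hδ hKδ hcstar hc1 hM0 h0 hM (hsub ht),
        cstar_mul_sqrt_energy_add_le hcstar hc1 hM (hsub ht)])
  have hinit := h.energy_t0_le hJ hM0 h0 hs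
  have hCJ : C / (2 * J) ≤ K := by rw [div_le_iff₀ (by positivity)]; linarith
  have hcoef : δ ^ 8 + K * (3 * K * δ + 2 * δ ^ 4) ≤ 6 * K ^ 2 * δ := by
    have hδ1 : δ ≤ 1 := by nlinarith
    have h8 : δ ^ 8 ≤ δ := pow_le_of_le_one hδ hδ1 (by norm_num)
    have h4 : δ ^ 4 ≤ δ := pow_le_of_le_one hδ hδ1 (by norm_num)
    nlinarith [mul_le_mul_of_nonneg_right (by nlinarith : 1 + 3 * K ^ 2 + 2 * K ≤ 6 * K ^ 2) hδ,
      mul_le_mul_of_nonneg_left h4 (by linarith : 0 ≤ K)]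
  calc E3 s ≤ E3 t0 + C / (2 * J) * (3 * K * δ + 2 * δ ^ 4) * (M * |s| ^ (-J)) ^ 2 := by
        convert hstep using 2; ring
    _ ≤ (δ ^ 4 * M * |s| ^ (-J)) ^ 2 + K * (3 * K * δ + 2 * δ ^ 4) * (M * |s| ^ (-J)) ^ 2 := by
        gcongr
        linarith [h.nonneg₁ t0 ⟨le_rfl, h.t0_le⟩, h.nonneg₂ t0 ⟨le_rfl, h.t0_le⟩]
    _ = (δ ^ 8 + K * (3 * K * δ + 2 * δ ^ 4)) * (M * |s| ^ (-J)) ^ 2 := by ring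
    _ ≤ 6 * K ^ 2 * δ * (M * |s| ^ (-J)) ^ 2 := by gcongr

include h hC hJ hK hCK hCKJ hδ hKδ hcstar hc1 hM0 h0 hM in
theorem energy_le_half {s : ℝ} (hs : s ∈ Icc t0 tstar) :
    E1 s + E2 s + E3 s ≤ (M * |s| ^ (-J)) ^ 2 / 2 := by
  have h1 := (Real.sqrt_le_left (by positivity)).mp
    (h.sqrt_energy₁_le hC hJ hK hCKJ hδ hKδ hcstar hc1 hM0 h0 hM hs)
  have h2 := (Real.sqrt_le_left (by positivity)).mp
    (h.sqrt_energy₂_le hC hJ hK hCK hCKJ hδ hKδ hcstar hc1 hM0 h0 hM hs)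
  have h3 := h.energy₃_le hC hJ hK hCK hCKJ hδ hKδ hcstar hc1 hM0 h0 hM hs
  have hcoef : 4 * K ^ 2 * δ ^ 4 + 9 * K ^ 2 * δ ^ 2 + 6 * K ^ 2 * δ ≤ 1 / 2 := by
    have hδ1 : δ ≤ 1 := by nlinarith
    have h4 : δ ^ 4 ≤ δ := pow_le_of_le_one hδ hδ1 (by norm_num)
    have h2 : δ ^ 2 ≤ δ := pow_le_of_le_one hδ hδ1 (by norm_num)
    nlinarith [mul_le_mul_of_nonneg_left h4 (sq_nonneg K),
      mul_le_mul_of_nonneg_left h2 (sq_nonneg K)]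
  calc E1 s + E2 s + E3 s
      ≤ (4 * K ^ 2 * δ ^ 4 + 9 * K ^ 2 * δ ^ 2 + 6 * K ^ 2 * δ) * (M * |s| ^ (-J)) ^ 2 := by
        nlinarith
    _ ≤ (M * |s| ^ (-J)) ^ 2 / 2 := by nlinarith [sq_nonneg (M * |s| ^ (-J))]

end Bootstrap

theorem weighted_sqrt_energy_max_le (h : ThreeEnergyInequalities C J c1 cstar t0 tstar E1 E2 E3)
    {K δ u : ℝ} (hC : 0 ≤ C) (hJ : 0 < J) (hK : 1 ≤ K) (hCK : C ≤ K) (hCKJ : C ≤ K * J)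
    (hδ : 0 < δ) (hKδ : 40 * K ^ 2 * δ ≤ 1) (hcstar : cstar ≤ δ ^ 4) (hu : u ∈ Icc t0 tstar)
    (hmax : IsMaxOn (fun t => |t| ^ J * √(E1 t + E2 t + E3 t)) (Icc t0 tstar) u) :
    |u| ^ J * √(E1 u + E2 u + E3 u) ≤
      (δ ^ 4)⁻¹ * (|t0| ^ J * √(E1 t0 + E2 t0 + E3 t0) + c1) := by
  set Φ := fun t => |t| ^ J * √(E1 t + E2 t + E3 t)
  have hΦ0 : ∀ t, 0 ≤ Φ t := fun t => mul_nonneg (Real.rpow_nonneg (abs_nonneg t) _)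
    (Real.sqrt_nonneg _)
  have hsqrt : ∀ t ∈ Icc t0 tstar, √(E1 t + E2 t + E3 t) = Φ t * |t| ^ (-J) := fun t ht =>
    (rpow_mul_mul_rpow_neg (h.abs_pos_of_mem ht) J _).symm
  change Φ u ≤ (δ ^ 4)⁻¹ * (Φ t0 + c1)
  by_contra! hlt
  rw [inv_mul_lt_iff₀ (by positivity)] at hlt
  have hM : ∀ t ∈ Icc t0 tstar, √(E1 t + E2 t + E3 t) ≤ Φ u * |t| ^ (-J) := fun t ht => by
    rw [hsqrt t ht]
    exact mul_le_mul_of_nonneg_right (hmax ht) (Real.rpow_nonneg (abs_nonneg t) _)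
  have h0 : √(E1 t0 + E2 t0 + E3 t0) ≤ δ ^ 4 * Φ u * |t0| ^ (-J) := by
    rw [hsqrt t0 (left_mem_Icc.mpr h.t0_le)]
    exact mul_le_mul_of_nonneg_right (by linarith [h.c1_nonneg])
      (Real.rpow_nonneg (abs_nonneg t0) _)
  have hhalf := h.energy_le_half hC hJ hK hCK hCKJ hδ.le hKδ hcstar
    (by linarith [hΦ0 t0]) (hΦ0 u) h0 hM hu
  rw [← Real.sq_sqrt (add_nonneg (add_nonneg (h.nonneg₁ u hu) (h.nonneg₂ u hu))
    (h.nonneg₃ u hu)), hsqrt u hu] at hhalf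
  have hzero : (Φ u * |u| ^ (-J)) ^ 2 = 0 := by linarith [sq_nonneg (Φ u * |u| ^ (-J))]
  have hΦu : Φ u = 0 := (mul_eq_zero.mp ((pow_eq_zero_iff two_ne_zero).mp hzero)).resolve_right
    (Real.rpow_pos_of_pos (h.abs_pos_of_mem hu) (-J)).ne'
  rw [hΦu, mul_zero] at hlt
  linarith [hΦ0 t0, h.c1_nonneg]

theorem sqrt_energy_le (h : ThreeEnergyInequalities C J c1 cstar t0 tstar E1 E2 E3) {K δ : ℝ}
    (hC : 0 ≤ C) (hJ : 0 < J) (hK : 1 ≤ K) (hCK : C ≤ K) (hCKJ : C ≤ K * J) (hδ : 0 < δ)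
    (hKδ : 40 * K ^ 2 * δ ≤ 1) (hcstar : cstar ≤ δ ^ 4) {τ : ℝ} (hτ : τ ∈ Icc t0 tstar) :
    √(E1 τ + E2 τ + E3 τ) ≤
      (δ ^ 4)⁻¹ * (|t0| ^ J * √(E1 t0 + E2 t0 + E3 t0) + c1) / |τ| ^ J := by
  have hcont : ContinuousOn (fun t => |t| ^ J * √(E1 t + E2 t + E3 t)) (Icc t0 tstar) := by
    have := h.continuousOn₁; have := h.continuousOn₂; have := h.continuousOn₃
    have := h.continuousOn_abs_rpow J
    fun_prop
  obtain ⟨u, hu, hmax⟩ := isCompact_Icc.exists_isMaxOn (nonempty_Icc.mpr h.t0_le) hcont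
  have hτJ := Real.rpow_pos_of_pos (h.abs_pos_of_mem hτ) J
  rw [le_div_iff₀ hτJ, mul_comm]
  exact (hmax hτ).trans
    (h.weighted_sqrt_energy_max_le hC hJ hK hCK hCKJ hδ hKδ hcstar hu hmax)

end ThreeEnergyInequalities

/-- **Abstract three-energy decay lemma.** -/
theorem abstract_three_energy_decay (C J0 : ℝ) (hC : 0 < C) (hJ0 : 0 < J0) :
    ∃ c3 c4 : ℝ, c3 ∈ Set.Ioo (0 : ℝ) 1 ∧ 0 < c4 ∧
      ∀ (t0 tstar J c1 cstar : ℝ) (E1 E2 E3 : ℝ → ℝ),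
        t0 < tstar → tstar ≤ -1 → J0 ≤ J → 0 ≤ c1 → 0 ≤ cstar → cstar ≤ c3 →
        ContinuousOn E1 (Set.Icc t0 tstar) →
        ContinuousOn E2 (Set.Icc t0 tstar) →
        ContinuousOn E3 (Set.Icc t0 tstar) →
        (∀ t ∈ Set.Icc t0 tstar, 0 ≤ E1 t) →
        (∀ t ∈ Set.Icc t0 tstar, 0 ≤ E2 t) →
        (∀ t ∈ Set.Icc t0 tstar, 0 ≤ E3 t) →
        (∀ τ ∈ Set.Icc t0 tstar,
          E1 τ - E1 (max t0 (τ - 2)) ≤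
            C * ∫ t in (max t0 (τ - 2))..τ, (1 / |t|) * Real.sqrt (E1 t) *
              (cstar * Real.sqrt (E1 t + E2 t + E3 t) + c1 * |t| ^ (-J))) →
        (∀ τ ∈ Set.Icc t0 tstar,
          E2 τ - E2 t0 ≤
            C * ∫ t in (max t0 (τ - 2))..τ, Real.sqrt (E2 t) *
              (Real.sqrt (E1 t) + cstar * Real.sqrt (E1 t + E2 t + E3 t) + c1 * |t| ^ (-J))) →
        (∀ τ ∈ Set.Icc t0 tstar,
          E3 τ - E3 (max t0 (τ - 2)) ≤
            C * ∫ t in (max t0 (τ - 2))..τ, (1 / |t|) * Real.sqrt (E3 t) *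
              (Real.sqrt (E2 t) + cstar * Real.sqrt (E1 t + E2 t + E3 t) + c1 * |t| ^ (-J))) →
        ∀ τ ∈ Set.Icc t0 tstar,
          Real.sqrt (E1 τ + E2 τ + E3 τ) ≤
            c4 * (|t0| ^ J * Real.sqrt (E1 t0 + E2 t0 + E3 t0) + c1) / |τ| ^ J := by
  set K := 1 + C + C / J0
  set δ := 1 / (40 * K ^ 2)
  have hCJ0 : 0 ≤ C / J0 := div_nonneg hC.le hJ0.le
  have hK : 1 ≤ K := by linarith
  have hδ : 0 < δ := by positivity
  have hKδ : 40 * K ^ 2 * δ = 1 := mul_one_div_cancel (by positivity)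
  have hδ1 : δ < 1 := by nlinarith
  refine ⟨δ ^ 4, (δ ^ 4)⁻¹, ⟨by positivity, pow_lt_one₀ hδ.le hδ1 (by norm_num)⟩, by positivity,
    fun t0 tstar J c1 cstar E1 E2 E3 ht0 htstar hJ hc1 hcstar hcstarδ hE1 hE2 hE3 hE1₀ hE2₀ hE3₀
      hineq₁ hineq₂ hineq₃ τ hτ => ?_⟩
  have hCKJ : C ≤ K * J := by
    have : C / J0 * J0 = C := div_mul_cancel₀ C hJ0.ne'
    nlinarith
  exact ThreeEnergyInequalities.sqrt_energy_le ⟨ht0.le, by linarith, hc1, hcstar, hE1, hE2, hE3,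
    hE1₀, hE2₀, hE3₀, hineq₁, hineq₂, hineq₃⟩ hC.le (hJ0.trans_le hJ) hK (by linarith)
    hCKJ hδ hKδ.le hcstarδ hτ
end

section
/- (Difference of solutions solves a linear homogeneous symmetric hyperbolic system) Let 𝒰 ⊂ ℝ⁴ be open, P ∈ ℕ, 0 < r ≤ ∞, and 𝒜 = 𝒰 × B_r(0) ⊂ ℝ⁴ × ℝ^P. For μ = 0,1,2,3, let M^μ(q,Θ) be symmetric real P×P matrices and h(q,Θ) ∈ ℝ^P, defined for (q,Θ) ∈ 𝒜, both C¹ on 𝒜 and extending together with their first-order derivatives continuously to the closure of 𝒜, with M⁰ positive definite on the closure of 𝒜. Let Θ1, Θ2 : 𝒰 → B_r(0) be C¹ solutions of Σ_{μ=0}^{3} M^μ(q,Θ) ∂Θ/∂q^μ = h(q,Θ), both extending with their first-order derivatives continuously to the closure of 𝒰. Set Θ_s = (1−s)·Θ1 + s·Θ2 for s ∈ [0,1] and define the P×P matrix H(q) for q ∈ 𝒰 by H_{ij}(q) = − Σ_{μ=0}^{3} Σ_{k=1}^{P} ( ∫₀¹ (∂(M^μ)_{ik}/∂Θ^j)(q,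 Θ_s(q)) ds ) · (∂Θ2^k/∂q^μ)(q) + ∫₀¹ (∂h_i/∂Θ^j)(q, Θ_s(q)) ds. Then H is continuous on 𝒰 and extends continuously to the closure of 𝒰, and the difference Υ = Θ2 − Θ1 satisfies the linear homogeneous system Σ_{μ=0}^{3} M^μ(q, Θ1(q)) ∂Υ/∂q^μ = H(q)·Υ on 𝒰. -/
open Set
open scoped ENNReal

noncomputable section

/-- Spatial part `ℝ³` with the Euclidean norm. -/
abbrev Sp3 := EuclideanSpace ℝ (Fin 3)

/-- A point `q = (q⁰, (q¹,q²,q³))` of `ℝ⁴`, split into time and space. -/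
abbrev Pt4 := ℝ × Sp3

/-- The unit coordinate direction `∂/∂q^μ` in `ℝ⁴` (with `μ = 0` the time direction). -/
def dir4 (μ : Fin 4) : Pt4 :=
  if h : (μ : ℕ) = 0 then ((1 : ℝ), 0)
  else ((0 : ℝ), EuclideanSpace.single (⟨(μ : ℕ) - 1, by have := μ.isLt; omega⟩ : Fin 3) 1)

/-- The partial derivative `∂f/∂q^μ`. -/
def pdQ (μ : Fin 4) (f : Pt4 → ℝ) : Pt4 → ℝ := fun p => fderiv ℝ f p (dir4 μ)

/-- The open ball `B_r(0) ⊂ ℝ^P` (all of `ℝ^P` if `r = ∞`), in the Euclidean norm. -/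
def BallP (P : ℕ) (r : ℝ≥0∞) : Set (EuclideanSpace ℝ (Fin P)) :=
  {v | (‖v‖₊ : ℝ≥0∞) < r}

/-- `f` is `C¹` on `S` and extends, together with its first-order derivatives,
continuously to the closure of `S`. -/
def C1Ext {E F : Type*} [NormedAddCommGroup E] [NormedSpace ℝ E]
    [NormedAddCommGroup F] [NormedSpace ℝ F] (f : E → F) (S : Set E) : Prop :=
  ContDiffOn ℝ 1 f S ∧ ContinuousOn f (closure S) ∧ ContinuousOn (fderiv ℝ f) (closure S)

/-!
Along the segment `Θ_s = (1 - s) Θ1 + s Θ2`, Hadamard's formula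
`f (q, Θ2) - f (q, Θ1) = ∑ⱼ (∫₀¹ ∂ⱼ f (q, Θ_s) ds) (Θ2ʲ - Θ1ʲ)`, applied to the entries of `M^μ`
and to `h`, turns the difference of the two equations into the linear system for `Θ2 - Θ1`.
Written with the full derivative of `M^μ` and `h` in place of the derivative of their slices
`f (q, ·)`, `H` is a parametric integral of functions continuous on the closure of `𝒜`; since the
ball is convex, the segments for `q ∈ closure 𝒰` stay in that closure, which gives the extension.
-/

theorem BallP_eq_eball (P : ℕ) (r : ℝ≥0∞) : BallP P r = Metric.eball 0 r := by
  ext v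
  simp [BallP, edist_zero_right, enorm_eq_nnnorm]

theorem isOpen_BallP (P : ℕ) (r : ℝ≥0∞) : IsOpen (BallP P r) :=
  BallP_eq_eball P r ▸ Metric.isOpen_eball

theorem convex_BallP (P : ℕ) (r : ℝ≥0∞) : Convex ℝ (BallP P r) :=
  BallP_eq_eball P r ▸ convex_eball 0 r

theorem continuousOn_intervalIntegral_of_continuousOn_uncurry {X : Type*} [TopologicalSpace X]
    {E : Type*} [NormedAddCommGroup E] [NormedSpace ℝ E]
    {F : X → ℝ → E} {s : Set X} {a b : ℝ} (hab : a ≤ b)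
    (hF : ContinuousOn (Function.uncurry F) (s ×ˢ Icc a b)) :
    ContinuousOn (fun x => ∫ t in a..b, F x t) s := by
  rw [continuousOn_iff_continuous_domRestrict]
  have hproj : Continuous fun p : s × ℝ => F p.1 (projIcc a b hab p.2) :=
    hF.comp_continuous (f := fun p : s × ℝ => ((p.1 : X), (projIcc a b hab p.2 : ℝ)))
      (by fun_prop) fun p => ⟨p.1.2, Subtype.mem _⟩
  refine (intervalIntegral.continuous_parametric_intervalIntegral_of_continuous'
    (f := fun (x : s) t => F x (projIcc a b hab t)) hproj a b).congr
      fun x => intervalIntegral.integral_congr fun t ht => ?_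
  rw [uIcc_of_le hab] at ht
  simp [projIcc_of_mem hab ht]

theorem segment_mem_closure_prod {E F : Type*} [TopologicalSpace E] [NormedAddCommGroup F]
    [NormedSpace ℝ F] {U : Set E} {B : Set F} {a b : E → F} (hB : Convex ℝ B)
    (ha : ContinuousOn a (closure U)) (hb : ContinuousOn b (closure U))
    (haU : MapsTo a U B) (hbU : MapsTo b U B) {q : E} (hq : q ∈ closure U)
    {t : ℝ} (ht : t ∈ Icc 0 1) : (q, (1 - t) • a q + t • b q) ∈ closure (U ×ˢ B) := by
  rw [closure_prod_eq]
  exact ⟨hq, hB.closure (closure_mono haU.image_subset (ha.image_closure (mem_image_of_mem a hq)))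
    (closure_mono hbU.image_subset (hb.image_closure (mem_image_of_mem b hq)))
    (by linarith [ht.2]) ht.1 (by ring)⟩

theorem C1Ext.differentiableAt {E F : Type*} [NormedAddCommGroup E] [NormedSpace ℝ E]
    [NormedAddCommGroup F] [NormedSpace ℝ F] {f : E → F} {S : Set E} (hf : C1Ext f S)
    (hS : IsOpen S) {x : E} (hx : x ∈ S) : DifferentiableAt ℝ f x :=
  (hf.1.differentiableOn one_ne_zero).differentiableAt (hS.mem_nhds hx)

section

variable {E F : Type*} [NormedAddCommGroup E] [NormedSpace ℝ E]
  [NormedAddCommGroup F] [NormedSpace ℝ F]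

theorem fderiv_comp_prodMk_right_apply {G : Type*} [NormedAddCommGroup G] [NormedSpace ℝ G]
    {f : E × F → G} {x : E} {y : F} (hf : DifferentiableAt ℝ f (x, y)) (v : F) :
    fderiv ℝ (fun y' => f (x, y')) y v = fderiv ℝ f (x, y) (0, v) := by
  change fderiv ℝ (f ∘ Prod.mk x) y v = _
  rw [(hf.hasFDerivAt.comp y (hasFDerivAt_prodMk_right x y)).fderiv]
  simp

theorem continuousOn_fderiv_segment {f : E → F} {S : Set E} {a b : E}
    (hS : IsOpen S) (hf : ContDiffOn ℝ 1 f S) (hab : segment ℝ a b ⊆ S) :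
    ContinuousOn (fun s : ℝ => fderiv ℝ f ((1 - s) • a + s • b)) (Icc 0 1) := by
  refine (hf.continuousOn_fderiv_of_isOpen hS le_rfl).comp (by fun_prop) fun s hs => hab ?_
  rw [segment_eq_image]
  exact mem_image_of_mem _ hs

theorem sub_eq_integral_fderiv_segment [CompleteSpace F] {f : E → F} {S : Set E} {a b : E}
    (hS : IsOpen S) (hf : ContDiffOn ℝ 1 f S) (hab : segment ℝ a b ⊆ S) :
    f b - f a = ∫ s in (0 : ℝ)..1, fderiv ℝ f ((1 - s) • a + s • b) (b - a) := by
  have hγ (s : ℝ) : HasDerivAt (fun s : ℝ => (1 - s) • a + s • b) (b - a) s := by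
    convert AffineMap.hasDerivAt_lineMap (a := a) (b := b) (x := s) using 1
    ext t
    simp [AffineMap.lineMap_apply_module]
  have := intervalIntegral.integral_eq_sub_of_hasDerivAt (f := fun s => f ((1 - s) • a + s • b))
    (fun s hs => ?_) (((ContinuousLinearMap.apply ℝ F (b - a)).continuous.comp_continuousOn
      (continuousOn_fderiv_segment hS hf hab)).intervalIntegrable_of_Icc zero_le_one)
  · simpa using this.symm
  · refine ((hf.differentiableOn one_ne_zero).differentiableAt (hS.mem_nhds (hab ?_))
      ).hasFDerivAt.comp_hasDerivAt s (hγ s)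
    rw [segment_eq_image, ← uIcc_of_le zero_le_one]
    exact mem_image_of_mem _ hs

/-- The mean over the segment of the derivative of `f (q, ·)` in direction `v`, taken from the
full derivative of `f`, which `C1Ext` controls up to the boundary. -/
def segmentMeanPartialDeriv (f : E × F → ℝ) (a b : E → F) (v : F) (q : E) : ℝ :=
  ∫ s in (0 : ℝ)..1, fderiv ℝ f (q, (1 - s) • a q + s • b q) (0, v)

theorem continuousOn_segmentMeanPartialDeriv {f : E × F → ℝ} {a b : E → F} {s : Set E}
    {K : Set (E × F)} (hf : ContinuousOn (fderiv ℝ f) K) (ha : ContinuousOn a s)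
    (hb : ContinuousOn b s) (hK : ∀ q ∈ s, ∀ t ∈ Icc (0 : ℝ) 1, (q, (1 - t) • a q + t • b q) ∈ K)
    (v : F) : ContinuousOn (segmentMeanPartialDeriv f a b v) s := by
  refine continuousOn_intervalIntegral_of_continuousOn_uncurry zero_le_one ?_
  refine (ContinuousLinearMap.apply ℝ ℝ ((0 : E), v)).continuous.comp_continuousOn
    (hf.comp ?_ fun p hp => hK p.1 hp.1 p.2 hp.2)
  have ha' : ContinuousOn (fun p : E × ℝ => a p.1) (s ×ˢ Icc 0 1) :=
    ha.comp continuousOn_fst fun p hp => hp.1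
  have hb' : ContinuousOn (fun p : E × ℝ => b p.1) (s ×ˢ Icc 0 1) :=
    hb.comp continuousOn_fst fun p hp => hp.1
  exact continuousOn_fst.prodMk
    (((continuousOn_const.sub continuousOn_snd).smul ha').add (continuousOn_snd.smul hb'))

theorem segmentMeanPartialDeriv_eq_integral_fderiv {f : E × F → ℝ} {a b : E → F} {q : E}
    (hf : ∀ t ∈ Icc (0 : ℝ) 1, DifferentiableAt ℝ f (q, (1 - t) • a q + t • b q)) (v : F) :
    segmentMeanPartialDeriv f a b v q
      = ∫ s in (0 : ℝ)..1, fderiv ℝ (fun y => f (q, y)) ((1 - s) • a q + s • b q) v := by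
  refine intervalIntegral.integral_congr fun s hs => ?_
  rw [uIcc_of_le zero_le_one] at hs
  exact (fderiv_comp_prodMk_right_apply (hf s hs) v).symm

end

theorem sub_eq_sum_integral_fderiv_segment_mul {ι : Type*} [Fintype ι] [DecidableEq ι]
    {f : EuclideanSpace ℝ ι → ℝ} {S : Set (EuclideanSpace ℝ ι)} {a b : EuclideanSpace ℝ ι}
    (hS : IsOpen S) (hf : ContDiffOn ℝ 1 f S) (hab : segment ℝ a b ⊆ S) :
    f b - f a = ∑ j, (∫ s in (0 : ℝ)..1,
      fderiv ℝ f ((1 - s) • a + s • b) (EuclideanSpace.single j 1)) * (b j - a j) := by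
  have hexpand (L : EuclideanSpace ℝ ι →L[ℝ] ℝ) (v : EuclideanSpace ℝ ι) :
      L v = ∑ j, L (EuclideanSpace.single j 1) * v j := by
    conv_lhs => rw [← (EuclideanSpace.basisFun ι ℝ).sum_repr v]
    simp [mul_comm]
  have hint (j : ι) : IntervalIntegrable
      (fun s => fderiv ℝ f ((1 - s) • a + s • b) (EuclideanSpace.single j 1))
      MeasureTheory.volume 0 1 :=
    ((ContinuousLinearMap.apply ℝ ℝ _).continuous.comp_continuousOn
      (continuousOn_fderiv_segment hS hf hab)).intervalIntegrable_of_Icc zero_le_one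
  simp_rw [sub_eq_integral_fderiv_segment hS hf hab, hexpand _ (b - a),
    intervalIntegral.integral_finsetSum fun j _ => (hint j).mul_const _,
    intervalIntegral.integral_mul_const]
  simp

theorem pdQ_sub {f g : Pt4 → ℝ} {q : Pt4} (hf : DifferentiableAt ℝ f q)
    (hg : DifferentiableAt ℝ g q) (μ : Fin 4) :
    pdQ μ (fun y => f y - g y) q = pdQ μ f q - pdQ μ g q := by
  simp [pdQ, fderiv_fun_sub hf hg]

theorem pdQ_eq_fderiv_apply {ι : Type*} [Fintype ι] {Θ : Pt4 → EuclideanSpace ℝ ι} {q : Pt4}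
    (hΘ : DifferentiableAt ℝ Θ q) (μ : Fin 4) (k : ι) :
    pdQ μ (fun y => Θ y k) q = fderiv ℝ Θ q (dir4 μ) k := by
  have := ((EuclideanSpace.proj (𝕜 := ℝ) k).hasFDerivAt.comp q hΘ.hasFDerivAt).fderiv
  rw [pdQ, show (fun y => Θ y k) = EuclideanSpace.proj (𝕜 := ℝ) k ∘ Θ from rfl, this]
  simp

section Linearization

variable {P : ℕ} (M : Fin 4 → Pt4 × EuclideanSpace ℝ (Fin P) → Fin P → Fin P → ℝ)
  (h : Pt4 × EuclideanSpace ℝ (Fin P) → Fin P → ℝ) (Θ1 Θ2 : Pt4 → EuclideanSpace ℝ (Fin P))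

def linearizationMatrix (q : Pt4) (i j : Fin P) : ℝ :=
  -(∑ μ, ∑ k, segmentMeanPartialDeriv (fun z => M μ z i k) Θ1 Θ2 (EuclideanSpace.single j 1) q
      * fderiv ℝ Θ2 q (dir4 μ) k)
    + segmentMeanPartialDeriv (fun z => h z i) Θ1 Θ2 (EuclideanSpace.single j 1) q

variable {M h Θ1 Θ2}

theorem continuousOn_linearizationMatrix {s : Set Pt4} {K : Set (Pt4 × EuclideanSpace ℝ (Fin P))}
    (hM : ∀ μ i k, ContinuousOn (fderiv ℝ fun z => M μ z i k) K)
    (hh : ∀ i, ContinuousOn (fderiv ℝ fun z => h z i) K)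
    (hΘ1 : ContinuousOn Θ1 s) (hΘ2 : ContinuousOn Θ2 s) (hdΘ2 : ContinuousOn (fderiv ℝ Θ2) s)
    (hK : ∀ q ∈ s, ∀ t ∈ Icc (0 : ℝ) 1, (q, (1 - t) • Θ1 q + t • Θ2 q) ∈ K) :
    ContinuousOn (fun q => linearizationMatrix M h Θ1 Θ2 q) s := by
  have hmean (f : Pt4 × EuclideanSpace ℝ (Fin P) → ℝ) (hf : ContinuousOn (fderiv ℝ f) K) v :=
    continuousOn_segmentMeanPartialDeriv hf hΘ1 hΘ2 hK v
  have hdΘ2' (μ : Fin 4) (k : Fin P) : ContinuousOn (fun q => fderiv ℝ Θ2 q (dir4 μ) k) s :=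
    (EuclideanSpace.proj k).continuous.comp_continuousOn
      ((ContinuousLinearMap.apply ℝ _ (dir4 μ)).continuous.comp_continuousOn hdΘ2)
  refine continuousOn_pi.2 fun i => continuousOn_pi.2 fun j => ?_
  exact (continuousOn_finsetSum _ fun μ _ => continuousOn_finsetSum _ fun k _ =>
    (hmean _ (hM μ i k) _).mul (hdΘ2' μ k)).neg.add (hmean _ (hh i) _)

theorem linearizationMatrix_eq {q : Pt4}
    (hM : ∀ μ i k, ∀ t ∈ Icc (0 : ℝ) 1,
      DifferentiableAt ℝ (fun z => M μ z i k) (q, (1 - t) • Θ1 q + t • Θ2 q))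
    (hh : ∀ i, ∀ t ∈ Icc (0 : ℝ) 1,
      DifferentiableAt ℝ (fun z => h z i) (q, (1 - t) • Θ1 q + t • Θ2 q))
    (hΘ2 : DifferentiableAt ℝ Θ2 q) (i j : Fin P) :
    linearizationMatrix M h Θ1 Θ2 q i j =
      -(∑ μ, ∑ k,
          (∫ s in (0 : ℝ)..1,
            fderiv ℝ (fun Θv => M μ (q, Θv) i k) ((1 - s) • Θ1 q + s • Θ2 q)
              (EuclideanSpace.single j 1)) * pdQ μ (fun y => Θ2 y k) q)
        + ∫ s in (0 : ℝ)..1,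
            fderiv ℝ (fun Θv => h (q, Θv) i) ((1 - s) • Θ1 q + s • Θ2 q)
              (EuclideanSpace.single j 1) := by
  simp only [linearizationMatrix, segmentMeanPartialDeriv_eq_integral_fderiv (hM _ _ _),
    segmentMeanPartialDeriv_eq_integral_fderiv (hh _), pdQ_eq_fderiv_apply hΘ2]

end Linearization

theorem sum_mul_sub_eq_sum_linearization_mul {κ ι R : Type*} [Fintype κ] [Fintype ι] [CommRing R]
    {M₁ M₂ D₁ D₂ : κ → ι → R} {c₁ c₂ : R} {B : κ → ι → ι → R} {A v : ι → R}
    (h₁ : ∑ μ, ∑ j, M₁ μ j * D₁ μ j = c₁) (h₂ : ∑ μ, ∑ j, M₂ μ j * D₂ μ j = c₂)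
    (hM : ∀ μ k, M₂ μ k - M₁ μ k = ∑ l, B μ k l * v l) (hc : c₂ - c₁ = ∑ l, A l * v l) :
    ∑ μ, ∑ j, M₁ μ j * (D₂ μ j - D₁ μ j) = ∑ l, (-(∑ μ, ∑ k, B μ k l * D₂ μ k) + A l) * v l := by
  have hB : ∑ μ, ∑ k, (M₂ μ k - M₁ μ k) * D₂ μ k = ∑ l, (∑ μ, ∑ k, B μ k l * D₂ μ k) * v l := by
    simp_rw [hM, Finset.sum_mul, mul_right_comm _ (v _)]
    exact (Finset.sum_congr rfl fun μ _ => Finset.sum_comm).trans Finset.sum_comm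
  calc ∑ μ, ∑ j, M₁ μ j * (D₂ μ j - D₁ μ j)
      = ∑ μ, ∑ j, M₂ μ j * D₂ μ j - ∑ μ, ∑ k, (M₂ μ k - M₁ μ k) * D₂ μ k
          - ∑ μ, ∑ j, M₁ μ j * D₁ μ j := by
        simp only [mul_sub, sub_mul, Finset.sum_sub_distrib]; ring
    _ = ∑ l, (-(∑ μ, ∑ k, B μ k l * D₂ μ k) + A l) * v l := by
        simp only [h₁, h₂, hB, add_mul, neg_mul, Finset.sum_add_distrib, Finset.sum_neg_distrib,
          ← hc]
        ring

theorem difference_solves_linear_system_general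
    (P : ℕ) (r : ℝ≥0∞)
    (U : Set Pt4) (hUopen : IsOpen U)
    (M : Fin 4 → Pt4 × EuclideanSpace ℝ (Fin P) → Fin P → Fin P → ℝ)
    (h : Pt4 × EuclideanSpace ℝ (Fin P) → Fin P → ℝ)
    (Θ1 Θ2 : Pt4 → EuclideanSpace ℝ (Fin P))
    (hMreg : ∀ μ i j, C1Ext (fun z => M μ z i j) (U ×ˢ BallP P r))
    (hhreg : ∀ i, C1Ext (fun z => h z i) (U ×ˢ BallP P r))
    (hmap1 : ∀ p ∈ U, Θ1 p ∈ BallP P r) (hmap2 : ∀ p ∈ U, Θ2 p ∈ BallP P r)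
    (hreg1 : C1Ext Θ1 U) (hreg2 : C1Ext Θ2 U)
    (hPDE1 : ∀ p ∈ U, ∀ i, ∑ μ, ∑ j, M μ (p, Θ1 p) i j * pdQ μ (fun y => Θ1 y j) p
      = h (p, Θ1 p) i)
    (hPDE2 : ∀ p ∈ U, ∀ i, ∑ μ, ∑ j, M μ (p, Θ2 p) i j * pdQ μ (fun y => Θ2 y j) p
      = h (p, Θ2 p) i) :
    -- the linearization matrix H(q)
    ∀ H : Pt4 → Fin P → Fin P → ℝ,
      (∀ (q : Pt4) (i j : Fin P), H q i j =
        -(∑ μ, ∑ k,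
            (∫ s in (0 : ℝ)..1,
              fderiv ℝ (fun Θv => M μ (q, Θv) i k) ((1 - s) • Θ1 q + s • Θ2 q)
                (EuclideanSpace.single j 1)) * pdQ μ (fun y => Θ2 y k) q)
          + ∫ s in (0 : ℝ)..1,
              fderiv ℝ (fun Θv => h (q, Θv) i) ((1 - s) • Θ1 q + s • Θ2 q)
                (EuclideanSpace.single j 1)) →
      ContinuousOn (fun q => H q) U ∧
      (∃ Hext : Pt4 → Fin P → Fin P → ℝ,
        ContinuousOn (fun q => Hext q) (closure U) ∧ Set.EqOn Hext H U) ∧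
      (∀ q ∈ U, ∀ i,
        ∑ μ, ∑ j, M μ (q, Θ1 q) i j * pdQ μ (fun y => Θ2 y j - Θ1 y j) q
          = ∑ j, H q i j * (Θ2 q j - Θ1 q j)) := by
  intro H hH
  have hS : IsOpen (U ×ˢ BallP P r) := hUopen.prod (isOpen_BallP P r)
  have hsegment (q : Pt4) (hq : q ∈ U) (t : ℝ) (ht : t ∈ Icc (0 : ℝ) 1) :
      (q, (1 - t) • Θ1 q + t • Θ2 q) ∈ U ×ˢ BallP P r :=
    ⟨hq, convex_BallP P r (hmap1 q hq) (hmap2 q hq) (by linarith [ht.2]) ht.1 (by ring)⟩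
  have hcont : ContinuousOn (fun q => linearizationMatrix M h Θ1 Θ2 q) (closure U) :=
    continuousOn_linearizationMatrix (fun μ i k => (hMreg μ i k).2.2) (fun i => (hhreg i).2.2)
      hreg1.2.1 hreg2.2.1 hreg2.2.2 fun q hq t ht =>
        segment_mem_closure_prod (convex_BallP P r) hreg1.2.1 hreg2.2.1 hmap1 hmap2 hq ht
  have hHeq : EqOn (linearizationMatrix M h Θ1 Θ2) H U := fun q hq => by
    ext i j
    rw [hH, linearizationMatrix_eq
      (fun μ i k t ht => (hMreg μ i k).differentiableAt hS (hsegment q hq t ht))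
      (fun i t ht => (hhreg i).differentiableAt hS (hsegment q hq t ht))
      (hreg2.differentiableAt hUopen hq)]
  refine ⟨(hcont.mono subset_closure).congr hHeq.symm, ⟨_, hcont, hHeq⟩, fun q hq i => ?_⟩
  have hsub (μ : Fin 4) (j : Fin P) : pdQ μ (fun y => Θ2 y j - Θ1 y j) q
      = pdQ μ (fun y => Θ2 y j) q - pdQ μ (fun y => Θ1 y j) q :=
    pdQ_sub ((differentiableAt_piLp 2).1 (hreg2.differentiableAt hUopen hq) j)
      ((differentiableAt_piLp 2).1 (hreg1.differentiableAt hUopen hq) j) μ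
  have hhadamard (f : Pt4 × EuclideanSpace ℝ (Fin P) → ℝ) (hf : C1Ext f (U ×ˢ BallP P r)) :=
    sub_eq_sum_integral_fderiv_segment_mul (isOpen_BallP P r)
      (hf.1.comp (contDiffOn_const.prodMk contDiffOn_id) fun y hy => ⟨hq, hy⟩)
      ((convex_BallP P r).segment_subset (hmap1 q hq) (hmap2 q hq))
  simp_rw [hsub, hH q i]
  exact sum_mul_sub_eq_sum_linearization_mul (hPDE1 q hq i) (hPDE2 q hq i)
    (fun μ k => hhadamard _ (hMreg μ i k)) (hhadamard _ (hhreg i))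

/-- **Difference of solutions solves a linear homogeneous symmetric hyperbolic system.** -/
theorem difference_solves_linear_system
    (P : ℕ) (r : ℝ≥0∞) (hr : 0 < r)
    (U : Set Pt4) (hUopen : IsOpen U)
    (M : Fin 4 → Pt4 × EuclideanSpace ℝ (Fin P) → Fin P → Fin P → ℝ)
    (h : Pt4 × EuclideanSpace ℝ (Fin P) → Fin P → ℝ)
    (Θ1 Θ2 : Pt4 → EuclideanSpace ℝ (Fin P))
    (hMsym : ∀ μ, ∀ z ∈ U ×ˢ BallP P r, ∀ i j, M μ z i j = M μ z j i)
    (hMreg : ∀ μ i j, C1Ext (fun z => M μ z i j) (U ×ˢ BallP P r))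
    (hhreg : ∀ i, C1Ext (fun z => h z i) (U ×ˢ BallP P r))
    (hM0pos : ∀ z ∈ closure (U ×ˢ BallP P r), ∀ w : Fin P → ℝ, w ≠ 0 →
      0 < ∑ i, ∑ j, w i * M 0 z i j * w j)
    (hmap1 : ∀ p ∈ U, Θ1 p ∈ BallP P r) (hmap2 : ∀ p ∈ U, Θ2 p ∈ BallP P r)
    (hreg1 : C1Ext Θ1 U) (hreg2 : C1Ext Θ2 U)
    (hPDE1 : ∀ p ∈ U, ∀ i, ∑ μ, ∑ j, M μ (p, Θ1 p) i j * pdQ μ (fun y => Θ1 y j) p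
      = h (p, Θ1 p) i)
    (hPDE2 : ∀ p ∈ U, ∀ i, ∑ μ, ∑ j, M μ (p, Θ2 p) i j * pdQ μ (fun y => Θ2 y j) p
      = h (p, Θ2 p) i) :
    -- the linearization matrix H(q)
    ∀ H : Pt4 → Fin P → Fin P → ℝ,
      (∀ (q : Pt4) (i j : Fin P), H q i j =
        -(∑ μ, ∑ k,
            (∫ s in (0 : ℝ)..1,
              fderiv ℝ (fun Θv => M μ (q, Θv) i k) ((1 - s) • Θ1 q + s • Θ2 q)
                (EuclideanSpace.single j 1)) * pdQ μ (fun y => Θ2 y k) q)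
          + ∫ s in (0 : ℝ)..1,
              fderiv ℝ (fun Θv => h (q, Θv) i) ((1 - s) • Θ1 q + s • Θ2 q)
                (EuclideanSpace.single j 1)) →
      ContinuousOn (fun q => H q) U ∧
      (∃ Hext : Pt4 → Fin P → Fin P → ℝ,
        ContinuousOn (fun q => Hext q) (closure U) ∧ Set.EqOn Hext H U) ∧
      (∀ q ∈ U, ∀ i,
        ∑ μ, ∑ j, M μ (q, Θ1 q) i j * pdQ μ (fun y => Θ2 y j - Θ1 y j) q
          = ∑ j, H q i j * (Θ2 q j - Θ1 q j)) :=
  difference_solves_linear_system_general P r U hUopen M h Θ1 Θ2 hMreg hhreg hmap1 hmap2 hreg1 hreg2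
    hPDE1 hPDE2
end
end

section
/- (Non-timelike lateral boundary of the refined domains) Let ξ0 ∈ ℝ², ū0 > 0, u0 < 0, and constants k0, k1, 𝔡 > 0 with 𝔡 < ū0 and 𝔡 < 1/|u0|. Let (ū,u) ∈ ℬ = (0, ū0 − 𝔡) × (−∞, −1/(1/|u0| − 𝔡)) and let ξ ∈ ℝ² satisfy |ξ − ξ0| = r(ū,u) where r(ū,u) = k0 + k1·|ū0 − ū|·| 1/|u0| − 1/|u| |. Suppose e1, e2 ∈ ℂ and e3, e4, e5 ∈ ℝ with e3 > 0 and k1·𝔡 ≥ 2·max{ (|u|/√e3)·√(|e1|² + |e2|²), u²·√(e4² + e5²) }. Set ξ̂ = (ξ − ξ0)/|ξ − ξ0| and define θ(L) = k1·| 1/|u| − 1/|u0| |·e3, θ(N) = ξ̂¹·e4 + ξ̂²·e5 + k1·|ū0 − ū|/u², θ(D) = ξ̂¹·e1 + ξ̂²·e2. Then θ(L) ≥ 0, θ(N) ≥ 0, and the Hermitian 2×2 matrix with rows (θ(N), θ(D)) and (conj(θ(D)), θ(L)) is positive semidefinite. -/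
/-!
On the domain `ℬ` both `|ū₀ - ū|` and `|1/|u| - 1/|u₀||` exceed `𝔡`, so with
`δ = k₁𝔡/(2u²)` we get `θ(L) ≥ k₁𝔡e₃` and, since `ξ̂` has norm at most one,
`θ(N) ≥ k₁𝔡/u² - √(e₄² + e₅²) ≥ δ`. By Cauchy–Schwarz and the bound on `k₁𝔡`,
`|θ(D)|² ≤ |e₁|² + |e₂|² ≤ k₁²𝔡²e₃/(4u²) ≤ δ · k₁𝔡e₃ ≤ θ(N) θ(L)`, and a Hermitian
`2 × 2` matrix with nonnegative diagonal and nonnegative determinant is positive semidefinite.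
-/

open Complex ComplexConjugate

theorem hermitian_form_nonneg_of_normSq_le {N L : ℝ} {c : ℂ} (hN : 0 ≤ N) (hL : 0 ≤ L)
    (hc : normSq c ≤ N * L) (z w : ℂ) :
    0 ≤ N * normSq z + L * normSq w + 2 * (conj z * c * w).re := by
  have hre : -(‖z‖ * ‖c‖ * ‖w‖) ≤ (conj z * c * w).re := by
    simpa using neg_le_of_abs_le (abs_re_le_norm (conj z * c * w))
  -- `(N x² + L y²)² - (2 |c| x y)² = (N x² - L y²)² + 4 (N L - |c|²) x² y² ≥ 0`
  have hAMGM : 2 * (‖z‖ * ‖c‖ * ‖w‖) ≤ N * ‖z‖ ^ 2 + L * ‖w‖ ^ 2 := by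
    rw [← Complex.sq_norm] at hc
    refine (abs_le_of_sq_le_sq' ?_ (by positivity)).2
    nlinarith [sq_nonneg (N * ‖z‖ ^ 2 - L * ‖w‖ ^ 2), mul_le_mul_of_nonneg_right hc
      (sq_nonneg (‖z‖ * ‖w‖))]
  rw [← Complex.sq_norm, ← Complex.sq_norm]
  linarith

theorem norm_smul_add_smul_sq_le {E : Type*} [SeminormedAddCommGroup E] [NormedSpace ℝ E]
    (a b : ℝ) (x y : E) : ‖a • x + b • y‖ ^ 2 ≤ (a ^ 2 + b ^ 2) * (‖x‖ ^ 2 + ‖y‖ ^ 2) := by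
  have h : ‖a • x + b • y‖ ≤ |a| * ‖x‖ + |b| * ‖y‖ := by
    simpa only [norm_smul, Real.norm_eq_abs] using norm_add_le (a • x) (b • y)
  calc ‖a • x + b • y‖ ^ 2 ≤ (|a| * ‖x‖ + |b| * ‖y‖) ^ 2 := by gcongr
    _ ≤ (a ^ 2 + b ^ 2) * (‖x‖ ^ 2 + ‖y‖ ^ 2) := by
      rw [← sq_abs a, ← sq_abs b]
      nlinarith [sq_nonneg (|a| * ‖y‖ - |b| * ‖x‖)]

theorem abs_mul_add_mul_le_sqrt {a b : ℝ} (hab : a ^ 2 + b ^ 2 ≤ 1) (x y : ℝ) :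
    |a * x + b * y| ≤ √(x ^ 2 + y ^ 2) :=
  Real.abs_le_sqrt <| by
    simpa using (norm_smul_add_smul_sq_le a b x y).trans (mul_le_of_le_one_left (by positivity) hab)

theorem normSq_ofReal_mul_add_le {a b : ℝ} (hab : a ^ 2 + b ^ 2 ≤ 1) (x y : ℂ) :
    normSq (a * x + b * y) ≤ normSq x + normSq y := by
  simpa [← Complex.sq_norm, Complex.real_smul] using
    (norm_smul_add_smul_sq_le a b x y).trans (mul_le_of_le_one_left (by positivity) hab)

theorem div_sqrt_sq_add_sq_le_one (x y : ℝ) :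
    (x / √(x ^ 2 + y ^ 2)) ^ 2 + (y / √(x ^ 2 + y ^ 2)) ^ 2 ≤ 1 := by
  rw [div_pow, div_pow, ← add_div, Real.sq_sqrt (by positivity)]
  exact div_self_le_one _

theorem one_div_abs_lt_of_lt_neg_one_div {c u : ℝ} (hc : 0 < c) (hu : u < -(1 / c)) :
    1 / |u| < c := by
  have hpos : 0 < 1 / c := by positivity
  have habs : 1 / c < |u| := by rw [abs_of_neg (by linarith)]; linarith
  exact (one_div_lt (hpos.trans habs) hc).2 habs

theorem le_sq_mul_div_sq_of_abs_div_sqrt_mul_sqrt_le {u e X r : ℝ} (he : 0 < e) (hu : u ≠ 0)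
    (hX : 0 ≤ X) (h : |u| / √e * √X ≤ r) : X ≤ r ^ 2 * e / u ^ 2 := by
  have h2 := pow_le_pow_left₀ (by positivity) h 2
  rw [mul_pow, div_pow, sq_abs, Real.sq_sqrt he.le, Real.sq_sqrt hX, div_mul_eq_mul_div,
    div_le_iff₀ he] at h2
  rw [le_div_iff₀ (by positivity)]
  linarith

theorem nontimelike_lateral_boundary_general
    (ξ1 ξ2 ξ01 ξ02 ub0 u0 k1 d ub u : ℝ)
    (e1 e2 : ℂ) (e3 e4 e5 : ℝ)
    (hk1 : 0 < k1) (hd : 0 < d)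
    (hd2 : d < 1 / |u0|)
    (hub' : ub < ub0 - d)
    (hu : u < -(1 / (1 / |u0| - d)))
    (he3 : 0 < e3)
    (hK : 2 * max ((|u| / Real.sqrt e3) * Real.sqrt (Complex.normSq e1 + Complex.normSq e2))
            (u ^ 2 * Real.sqrt (e4 ^ 2 + e5 ^ 2)) ≤ k1 * d) :
    0 ≤ k1 * abs (1 / |u| - 1 / |u0|) * e3 ∧
    0 ≤ (ξ1 - ξ01) / Real.sqrt ((ξ1 - ξ01) ^ 2 + (ξ2 - ξ02) ^ 2) * e4
        + (ξ2 - ξ02) / Real.sqrt ((ξ1 - ξ01) ^ 2 + (ξ2 - ξ02) ^ 2) * e5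
        + k1 * |ub0 - ub| / u ^ 2 ∧
    ∀ z w : ℂ,
      0 ≤ ((ξ1 - ξ01) / Real.sqrt ((ξ1 - ξ01) ^ 2 + (ξ2 - ξ02) ^ 2) * e4
            + (ξ2 - ξ02) / Real.sqrt ((ξ1 - ξ01) ^ 2 + (ξ2 - ξ02) ^ 2) * e5
            + k1 * |ub0 - ub| / u ^ 2) * Complex.normSq z
          + k1 * abs (1 / |u| - 1 / |u0|) * e3 * Complex.normSq w
          + 2 * ((starRingEnd ℂ) z *
              (Complex.ofReal ((ξ1 - ξ01) / Real.sqrt ((ξ1 - ξ01) ^ 2 + (ξ2 - ξ02) ^ 2)) * e1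
               + Complex.ofReal ((ξ2 - ξ02) / Real.sqrt ((ξ1 - ξ01) ^ 2 + (ξ2 - ξ02) ^ 2)) * e2)
              * w).re := by
  set a := (ξ1 - ξ01) / Real.sqrt ((ξ1 - ξ01) ^ 2 + (ξ2 - ξ02) ^ 2)
  set b := (ξ2 - ξ02) / Real.sqrt ((ξ1 - ξ01) ^ 2 + (ξ2 - ξ02) ^ 2)
  have hab : a ^ 2 + b ^ 2 ≤ 1 := div_sqrt_sq_add_sq_le_one _ _
  have hc : 0 < 1 / |u0| - d := by linarith
  have hu_neg : u < 0 := hu.trans (neg_lt_zero.2 (one_div_pos.2 hc))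
  have hu2 : 0 < u ^ 2 := sq_pos_of_neg hu_neg
  have hA : d ≤ abs (1 / |u| - 1 / |u0|) := by
    rw [abs_sub_comm]
    linarith [one_div_abs_lt_of_lt_neg_one_div hc hu, le_abs_self (1 / |u0| - 1 / |u|)]
  have hB : d ≤ |ub0 - ub| := by linarith [le_abs_self (ub0 - ub)]
  obtain ⟨hE, hS⟩ := max_le_iff.1 ((le_div_iff₀' two_pos).2 hK)
  have hθL : k1 * d * e3 ≤ k1 * abs (1 / |u| - 1 / |u0|) * e3 := by gcongr
  have hθN : k1 * d / u ^ 2 / 2 ≤ a * e4 + b * e5 + k1 * |ub0 - ub| / u ^ 2 := by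
    have hS' : √(e4 ^ 2 + e5 ^ 2) ≤ k1 * d / u ^ 2 / 2 := by
      rw [div_div, le_div_iff₀ (by positivity)]
      linarith
    have hB' : k1 * d / u ^ 2 ≤ k1 * |ub0 - ub| / u ^ 2 := by gcongr
    linarith [neg_abs_le (a * e4 + b * e5), abs_mul_add_mul_le_sqrt hab e4 e5]
  have hθD : normSq (a * e1 + b * e2) ≤ k1 * d / u ^ 2 / 2 * (k1 * d * e3) := by
    calc normSq (a * e1 + b * e2) ≤ normSq e1 + normSq e2 := normSq_ofReal_mul_add_le hab e1 e2
      _ ≤ (k1 * d / 2) ^ 2 * e3 / u ^ 2 :=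
        le_sq_mul_div_sq_of_abs_div_sqrt_mul_sqrt_le he3 hu_neg.ne
          (add_nonneg (normSq_nonneg _) (normSq_nonneg _)) hE
      _ = k1 * d / u ^ 2 / 2 * (k1 * d * e3) / 2 := by ring
      _ ≤ k1 * d / u ^ 2 / 2 * (k1 * d * e3) := half_le_self (by positivity)
  have hδ : 0 ≤ k1 * d / u ^ 2 / 2 := by positivity
  exact ⟨by positivity, hδ.trans hθN, hermitian_form_nonneg_of_normSq_le (hδ.trans hθN)
    (by positivity) (hθD.trans (mul_le_mul hθN hθL (by positivity) (hδ.trans hθN)))⟩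

/-- **Non-timelike lateral boundary of the refined domains.** -/
theorem nontimelike_lateral_boundary
    (ξ1 ξ2 ξ01 ξ02 ub0 u0 k0 k1 d ub u : ℝ)
    (e1 e2 : ℂ) (e3 e4 e5 : ℝ)
    (hub0 : 0 < ub0) (hu0 : u0 < 0)
    (hk0 : 0 < k0) (hk1 : 0 < k1) (hd : 0 < d)
    (hd1 : d < ub0) (hd2 : d < 1 / |u0|)
    (hub : 0 < ub) (hub' : ub < ub0 - d)
    (hu : u < -(1 / (1 / |u0| - d)))
    (hr : Real.sqrt ((ξ1 - ξ01) ^ 2 + (ξ2 - ξ02) ^ 2)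
        = k0 + k1 * |ub0 - ub| * abs (1 / |u0| - 1 / |u|))
    (he3 : 0 < e3)
    (hK : 2 * max ((|u| / Real.sqrt e3) * Real.sqrt (Complex.normSq e1 + Complex.normSq e2))
            (u ^ 2 * Real.sqrt (e4 ^ 2 + e5 ^ 2)) ≤ k1 * d) :
    0 ≤ k1 * abs (1 / |u| - 1 / |u0|) * e3 ∧
    0 ≤ (ξ1 - ξ01) / Real.sqrt ((ξ1 - ξ01) ^ 2 + (ξ2 - ξ02) ^ 2) * e4
        + (ξ2 - ξ02) / Real.sqrt ((ξ1 - ξ01) ^ 2 + (ξ2 - ξ02) ^ 2) * e5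
        + k1 * |ub0 - ub| / u ^ 2 ∧
    ∀ z w : ℂ,
      0 ≤ ((ξ1 - ξ01) / Real.sqrt ((ξ1 - ξ01) ^ 2 + (ξ2 - ξ02) ^ 2) * e4
            + (ξ2 - ξ02) / Real.sqrt ((ξ1 - ξ01) ^ 2 + (ξ2 - ξ02) ^ 2) * e5
            + k1 * |ub0 - ub| / u ^ 2) * Complex.normSq z
          + k1 * abs (1 / |u| - 1 / |u0|) * e3 * Complex.normSq w
          + 2 * ((starRingEnd ℂ) z *
              (Complex.ofReal ((ξ1 - ξ01) / Real.sqrt ((ξ1 - ξ01) ^ 2 + (ξ2 - ξ02) ^ 2)) * e1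
               + Complex.ofReal ((ξ2 - ξ02) / Real.sqrt ((ξ1 - ξ01) ^ 2 + (ξ2 - ξ02) ^ 2)) * e2)
              * w).re :=
  nontimelike_lateral_boundary_general ξ1 ξ2 ξ01 ξ02 ub0 u0 k1 d ub u e1 e2 e3 e4 e5 hk1 hd hd2 hub'
    hu he3 hK
end

section
/- (Frame bounds in the far-field region imply the boundary positivity hypotheses) Let 𝔡 = 10⁻³ and k1 = 1/(18𝔡), and let a, 𝔄 ∈ ℝ with 0 < |𝔄| ≤ |a| ≤ 10⁻³. Let ū ∈ (0,2), u ≤ −𝔡⁻¹, and ξ ∈ ℝ² with |ξ| < 4·|a/𝔄|. Set ρ = 𝔄²·ū − u and e_{a,𝔄}(ξ) = (a/2)·(1 + (𝔄²/a²)·|ξ|²). Let f1, f2 ∈ ℂ and f3, f4, f5 ∈ ℝ with |f_i| ≤ 5 for i = 1,…,5, and define e1 = e_{a,𝔄}(ξ)/ρ + f1/u², e2 = i·e_{a,𝔄}(ξ)/ρ + f2/u², e3 = 1 + f3/u², e4 = f4/u³, e5 = f5/u³. Then e3 ≥ (3/4)² > 0 and k1·𝔡 ≥ 2·max{ (|u|/√e3)·√(|e1|²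 + |e2|²), u²·√(e4² + e5²) }. -/
/-!
Each component is a small perturbation: `e₁, e₂ = O(1/|u|)`, `e₃ = 1 + O(1/u²)` and
`e₄, e₅ = O(1/|u|³)`, so both quantities inside the maximum are `O(1/|u|)`. The one real input is
that `|ξ| < 4|a/𝔄|` forces `(𝔄²/a²)|ξ|² < 16`, whence `|e_{a,𝔄}(ξ)| ≤ 17|a|/2`, together with
`ρ ≥ |u|`. With `|u| ≥ 1000`, `|a| ≤ 10⁻³` and `√2 < 3/2`, each quantity is below `1/36 = k₁𝔡/2`.
-/

open Complex

lemma div_sq_lt_sq_of_sqrt_lt {s b c : ℝ} (h : √s < c * |b|) : s / b ^ 2 < c ^ 2 := by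
  have hpos : 0 < c * |b| := (Real.sqrt_nonneg s).trans_lt h
  have hb : b ≠ 0 := fun hb => by simp [hb] at hpos
  rw [div_lt_iff₀ (by positivity), ← sq_abs b, ← mul_pow]
  exact (Real.sqrt_lt' hpos).mp h

lemma abs_half_mul_one_add_le {a A s c : ℝ} (hs : 0 ≤ s) (h : √s < c * |a / A|) :
    |a / 2 * (1 + A ^ 2 / a ^ 2 * s)| ≤ (1 + c ^ 2) / 2 * |a| := by
  have hlt : A ^ 2 / a ^ 2 * s < c ^ 2 := by
    convert div_sq_lt_sq_of_sqrt_lt h using 1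
    rw [div_pow, div_div_eq_mul_div]
    ring
  have h0 : 0 ≤ A ^ 2 / a ^ 2 * s := by positivity
  rw [abs_mul, abs_div, abs_two, abs_of_nonneg (show 0 ≤ 1 + A ^ 2 / a ^ 2 * s by linarith)]
  nlinarith [mul_le_mul_of_nonneg_left hlt.le (abs_nonneg a)]

lemma norm_add_div_sq_le (z f : ℂ) (u : ℝ) : ‖z + f / (u : ℂ) ^ 2‖ ≤ ‖z‖ + ‖f‖ / u ^ 2 := by
  calc ‖z + f / (u : ℂ) ^ 2‖ ≤ ‖z‖ + ‖f / (u : ℂ) ^ 2‖ := norm_add_le _ _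
    _ = ‖z‖ + ‖f‖ / u ^ 2 := by rw [norm_div, norm_pow, Complex.norm_real, Real.norm_eq_abs, sq_abs]

lemma div_sq_le_div_div_abs {c R u : ℝ} (hc : 0 ≤ c) (hR : 0 < R) (hRu : R ≤ |u|) :
    c / u ^ 2 ≤ c / R / |u| := by
  rw [← sq_abs, sq, ← div_div]
  gcongr

lemma norm_add_div_sq_le_div_abs {z f : ℂ} {u c K R : ℝ} (hz : ‖z‖ ≤ c / |u|) (hf : ‖f‖ ≤ K)
    (hR : 0 < R) (hRu : R ≤ |u|) : ‖z + f / (u : ℂ) ^ 2‖ ≤ (c + K / R) / |u| := by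
  have hK : 0 ≤ K := (norm_nonneg f).trans hf
  calc ‖z + f / (u : ℂ) ^ 2‖ ≤ ‖z‖ + ‖f‖ / u ^ 2 := norm_add_div_sq_le z f u
    _ ≤ c / |u| + K / R / |u| :=
      add_le_add hz <| (div_le_div_of_nonneg_right hf (sq_nonneg u)).trans
        (div_sq_le_div_div_abs hK hR hRu)
    _ = (c + K / R) / |u| := by rw [add_div]

lemma sqrt_normSq_add_normSq_le {z w : ℂ} {M : ℝ} (hz : ‖z‖ ≤ M) (hw : ‖w‖ ≤ M) :
    √(normSq z + normSq w) ≤ √2 * M := by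
  have hM : 0 ≤ M := (norm_nonneg z).trans hz
  rw [← Real.sqrt_sq hM, ← Real.sqrt_mul zero_le_two, ← Complex.sq_norm, ← Complex.sq_norm]
  gcongr
  nlinarith [norm_nonneg z, norm_nonneg w]

lemma sq_mul_sqrt_div_pow_three (x y u : ℝ) :
    u ^ 2 * √((x / u ^ 3) ^ 2 + (y / u ^ 3) ^ 2) = √(x ^ 2 + y ^ 2) / |u| := by
  rcases eq_or_ne u 0 with rfl | hu
  · simp
  rw [div_pow, div_pow, ← add_div, Real.sqrt_div' _ (sq_nonneg _), Real.sqrt_sq_eq_abs, abs_pow,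
    ← sq_abs u]
  field_simp

lemma sq_le_one_add_div_sq {f u : ℝ} (hf : |f| ≤ 5) (hu : 1000 ≤ |u|) :
    (3 / 4 : ℝ) ^ 2 ≤ 1 + f / u ^ 2 := by
  have hu2 : 1000 ^ 2 ≤ u ^ 2 := by simpa only [sq_abs] using pow_le_pow_left₀ (by norm_num) hu 2
  have : -5 / u ^ 2 ≤ f / u ^ 2 := by gcongr; exact neg_le_of_abs_le hf
  have : 5 / u ^ 2 ≤ 5 / 1000 ^ 2 := by gcongr
  linarith [neg_div (u ^ 2) 5]

lemma div_sqrt_mul_sqrt_normSq_add_le {x u e : ℝ} {f₁ f₂ : ℂ} (hx : |x| ≤ 17 / 2000 / |u|)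
    (hu : 1000 ≤ |u|) (he : (3 / 4 : ℝ) ^ 2 ≤ e) (hf₁ : ‖f₁‖ ≤ 5) (hf₂ : ‖f₂‖ ≤ 5) :
    |u| / √e * √(normSq ((x : ℂ) + f₁ / (u : ℂ) ^ 2) + normSq (I * x + f₂ / (u : ℂ) ^ 2))
      ≤ 1 / 36 := by
  have he₁ : ‖(x : ℂ) + f₁ / (u : ℂ) ^ 2‖ ≤ (17 / 2000 + 5 / 1000) / |u| :=
    norm_add_div_sq_le_div_abs (by rwa [Complex.norm_real, Real.norm_eq_abs]) hf₁ (by norm_num) hu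
  have he₂ : ‖I * x + f₂ / (u : ℂ) ^ 2‖ ≤ (17 / 2000 + 5 / 1000) / |u| :=
    norm_add_div_sq_le_div_abs
      (by rwa [norm_mul, Complex.norm_I, one_mul, Complex.norm_real, Real.norm_eq_abs]) hf₂
      (by norm_num) hu
  have hsqrt_e : 3 / 4 ≤ √e := Real.le_sqrt_of_sq_le he
  calc |u| / √e * √(normSq ((x : ℂ) + f₁ / (u : ℂ) ^ 2) + normSq (I * x + f₂ / (u : ℂ) ^ 2))
      ≤ |u| / (3 / 4) * (3 / 2 * ((17 / 2000 + 5 / 1000) / |u|)) := by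
        gcongr
        exact (sqrt_normSq_add_normSq_le he₁ he₂).trans
          (by gcongr; exact Real.sqrt_two_lt_three_halves.le)
    _ ≤ 1 / 36 := by field_simp; norm_num

lemma sq_mul_sqrt_div_pow_three_le {f₄ f₅ u : ℝ} (hf₄ : |f₄| ≤ 5) (hf₅ : |f₅| ≤ 5)
    (hu : 1000 ≤ |u|) : u ^ 2 * √((f₄ / u ^ 3) ^ 2 + (f₅ / u ^ 3) ^ 2) ≤ 1 / 36 := by
  rw [sq_mul_sqrt_div_pow_three]
  have : √(f₄ ^ 2 + f₅ ^ 2) ≤ 8 := by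
    rw [Real.sqrt_le_left (by norm_num)]
    nlinarith [sq_abs f₄, sq_abs f₅, abs_nonneg f₄, abs_nonneg f₅]
  calc √(f₄ ^ 2 + f₅ ^ 2) / |u| ≤ 8 / 1000 := by gcongr
    _ ≤ 1 / 36 := by norm_num

theorem frame_bounds_far_field_general
    (a A ξ1 ξ2 ub u : ℝ) (f1 f2 : ℂ) (f3 f4 f5 : ℝ)
    (ha : |a| ≤ 1 / 1000)
    (hub : 0 < ub) (hu : u ≤ -1000)
    (hξ : Real.sqrt (ξ1 ^ 2 + ξ2 ^ 2) < 4 * |a / A|)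
    (hf1 : ‖f1‖ ≤ 5) (hf2 : ‖f2‖ ≤ 5)
    (hf3 : |f3| ≤ 5) (hf4 : |f4| ≤ 5) (hf5 : |f5| ≤ 5) :
    let ρ : ℝ := A ^ 2 * ub - u
    let eaA : ℝ := (a / 2) * (1 + (A ^ 2 / a ^ 2) * (ξ1 ^ 2 + ξ2 ^ 2))
    let e1 : ℂ := Complex.ofReal (eaA / ρ) + f1 / (Complex.ofReal u) ^ 2
    let e2 : ℂ := Complex.I * Complex.ofReal (eaA / ρ) + f2 / (Complex.ofReal u) ^ 2
    let e3 : ℝ := 1 + f3 / u ^ 2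
    let e4 : ℝ := f4 / u ^ 3
    let e5 : ℝ := f5 / u ^ 3
    (3 / 4 : ℝ) ^ 2 ≤ e3 ∧ 0 < e3 ∧
      2 * max ((|u| / Real.sqrt e3) * Real.sqrt (Complex.normSq e1 + Complex.normSq e2))
          (u ^ 2 * Real.sqrt (e4 ^ 2 + e5 ^ 2))
        ≤ (1 / (18 * (1 / 1000))) * (1 / 1000) := by
  intro ρ eaA e1 e2 e3 e4 e5
  have hu' : 1000 ≤ |u| := by rw [abs_of_neg (by linarith)]; linarith
  have he3 : (3 / 4 : ℝ) ^ 2 ≤ e3 := sq_le_one_add_div_sq hf3 hu'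
  have hρ : |u| ≤ ρ := by
    rw [abs_of_neg (by linarith)]
    linarith [mul_nonneg (sq_nonneg A) hub.le]
  have heaA : |eaA| ≤ 17 / 2000 := by
    have := abs_half_mul_one_add_le (by positivity) hξ
    linarith
  have hx : |eaA / ρ| ≤ 17 / 2000 / |u| := by
    rw [abs_div, abs_of_pos (show 0 < ρ by linarith)]
    calc |eaA| / ρ ≤ |eaA| / |u| := by gcongr
      _ ≤ 17 / 2000 / |u| := by gcongr
  refine ⟨he3, by linarith, ?_⟩
  linarith [max_le (div_sqrt_mul_sqrt_normSq_add_le hx hu' he3 hf1 hf2)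
    (sq_mul_sqrt_div_pow_three_le hf4 hf5 hu')]

/-- **Frame bounds in the far-field region imply the boundary positivity hypotheses.** -/
theorem frame_bounds_far_field
    (a A ξ1 ξ2 ub u : ℝ) (f1 f2 : ℂ) (f3 f4 f5 : ℝ)
    (hA0 : 0 < |A|) (hAa : |A| ≤ |a|) (ha : |a| ≤ 1 / 1000)
    (hub : 0 < ub) (hub2 : ub < 2) (hu : u ≤ -1000)
    (hξ : Real.sqrt (ξ1 ^ 2 + ξ2 ^ 2) < 4 * |a / A|)
    (hf1 : ‖f1‖ ≤ 5) (hf2 : ‖f2‖ ≤ 5)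
    (hf3 : |f3| ≤ 5) (hf4 : |f4| ≤ 5) (hf5 : |f5| ≤ 5) :
    let ρ : ℝ := A ^ 2 * ub - u
    let eaA : ℝ := (a / 2) * (1 + (A ^ 2 / a ^ 2) * (ξ1 ^ 2 + ξ2 ^ 2))
    let e1 : ℂ := Complex.ofReal (eaA / ρ) + f1 / (Complex.ofReal u) ^ 2
    let e2 : ℂ := Complex.I * Complex.ofReal (eaA / ρ) + f2 / (Complex.ofReal u) ^ 2
    let e3 : ℝ := 1 + f3 / u ^ 2
    let e4 : ℝ := f4 / u ^ 3
    let e5 : ℝ := f5 / u ^ 3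
    (3 / 4 : ℝ) ^ 2 ≤ e3 ∧ 0 < e3 ∧
      2 * max ((|u| / Real.sqrt e3) * Real.sqrt (Complex.normSq e1 + Complex.normSq e2))
          (u ^ 2 * Real.sqrt (e4 ^ 2 + e5 ^ 2))
        ≤ (1 / (18 * (1 / 1000))) * (1 / 1000) :=
  frame_bounds_far_field_general a A ξ1 ξ2 ub u f1 f2 f3 f4 f5 ha hub hu hξ hf1 hf2 hf3 hf4 hf5
end

section
/- (Trapped sphere criterion) Let c ∈ (0,1), 𝔄 > 0, ū1 ∈ (0,1), and let η : D_4(0) × (0,1) → ℂ be continuous. Set Λ = inf_{ξ ∈ D_4(0)} ∫₀^{ū1} |η(ξ,s)|² ds and assume Λ > 0 and 0 < 𝔄 < (1/4)·√c·min{1, Λ}. Set u1 = −Λ/(2𝔄²) and ρ1 = 𝔄²·ū1 − u1. Suppose γ2, γ6 : D_4(0) → ℝ satisfy, for every ξ ∈ D_4(0): | u1²·γ2(ξ) − 𝔄²·u1²/ρ1 + ∫₀^{ū1} |η(ξ,s)|² ds | ≤ 1/(c·|u1|) and | u1²·γ6(ξ) + u1²/ρ1 | ≤ 1/(c·|u1|).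 Then γ2(ξ) < 0 and γ6(ξ) < 0 for every ξ ∈ D_4(0). -/
/-!
With `w = |u₁| = Λ / (2𝔄²)` and `ρ₁ = 𝔄²ū₁ + w`, the smallness of `𝔄` gives `16𝔄² < c·min(1, Λ)²`,
hence `c w > 8` and `c w Λ > 8`. The error `1 / (c w)` is then smaller than `w² / ρ₁`, the size of
the leading term of `u₁² γ₆`, and together with `𝔄² w² / ρ₁ < 𝔄² w = Λ / 2` smaller than the
margin `Λ - 𝔄² w² / ρ₁ ≤ ∫ |η|² - 𝔄² w² / ρ₁` of `u₁² γ₂`.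
-/

lemma sixteen_mul_sq_lt_of_lt_quarter_sqrt_mul {c A m : ℝ} (hc : 0 ≤ c) (hA : 0 ≤ A)
    (h : A < 1 / 4 * Real.sqrt c * m) : 16 * A ^ 2 < c * m ^ 2 := by
  have := pow_lt_pow_left₀ h hA two_ne_zero
  rw [mul_pow, mul_pow, Real.sq_sqrt hc] at this
  linarith

lemma eight_lt_mul_div_two_mul_sq {k A Λ : ℝ} (hA : A ≠ 0) (h : 16 * A ^ 2 < k * Λ) :
    8 < k * (Λ / (2 * A ^ 2)) := by
  rw [mul_div_assoc', lt_div_iff₀ (by positivity)]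
  linarith

lemma min_one_sq_le_self {x : ℝ} (hx : 0 ≤ x) : min 1 x ^ 2 ≤ x :=
  calc min 1 x ^ 2 ≤ min 1 x := by
        rw [sq]; exact mul_le_of_le_one_left (le_min zero_le_one hx) (min_le_left 1 x)
    _ ≤ x := min_le_right 1 x

lemma min_one_sq_le_sq {x : ℝ} (hx : 0 ≤ x) : min 1 x ^ 2 ≤ x ^ 2 :=
  pow_le_pow_left₀ (le_min zero_le_one hx) (min_le_right 1 x) 2

lemma neg_of_abs_mul_add_le {k x b ε : ℝ} (hk : 0 ≤ k) (h : |k * x + b| ≤ ε) (hε : ε < b) :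
    x < 0 :=
  neg_of_mul_neg_right (by linarith [(abs_le.1 h).2]) hk

lemma trapping_margins {c A ub1 Λ : ℝ} (hc0 : 0 < c) (hc1 : c < 1) (hA : 0 < A) (hub0 : 0 < ub1)
    (hub1 : ub1 < 1) (hΛ : 0 < Λ) (hAsmall : A < 1 / 4 * Real.sqrt c * min 1 Λ) :
    let w := Λ / (2 * A ^ 2)
    1 / (c * w) < w ^ 2 / (A ^ 2 * ub1 + w) ∧
      A ^ 2 * w ^ 2 / (A ^ 2 * ub1 + w) + 1 / (c * w) < Λ := by
  intro w
  have h16 := sixteen_mul_sq_lt_of_lt_quarter_sqrt_mul hc0.le hA.le hAsmall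
  have hcw : 8 < c * w := eight_lt_mul_div_two_mul_sq hA.ne' <|
    h16.trans_le (mul_le_mul_of_nonneg_left (min_one_sq_le_self hΛ.le) hc0.le)
  have hcΛw : 8 < c * Λ * w := eight_lt_mul_div_two_mul_sq hA.ne' <| by
    rw [mul_assoc, ← sq]
    exact h16.trans_le (mul_le_mul_of_nonneg_left (min_one_sq_le_sq hΛ.le) hc0.le)
  have hw : 0 < w := by positivity
  have hw8 : 8 < w := hcw.trans (mul_lt_of_lt_one_left hw hc1)
  have hΛw : Λ = 2 * A ^ 2 * w := (mul_div_cancel₀ Λ (by positivity)).symm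
  set ρ := A ^ 2 * ub1 + w
  have hwρ : w < ρ := lt_add_of_pos_left w (by positivity)
  have hρ2w : ρ < 2 * w := by
    have : c * min 1 Λ ^ 2 ≤ 1 :=
      mul_le_one₀ hc1.le (sq_nonneg _) (pow_le_one₀ (le_min zero_le_one hΛ.le) (min_le_left 1 Λ))
    nlinarith [mul_lt_of_lt_one_right (by positivity : 0 < A ^ 2) hub1]
  have hρ : 0 < ρ := hw.trans hwρ
  constructor
  · rw [div_lt_div_iff₀ (by positivity) hρ]
    nlinarith [mul_lt_mul_of_pos_left hcw (by positivity : 0 < w ^ 2)]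
  · have hfirst : A ^ 2 * w ^ 2 / ρ < Λ / 2 := by
      rw [div_lt_iff₀ hρ, hΛw]
      nlinarith [mul_lt_mul_of_pos_left hwρ (by positivity : 0 < A ^ 2 * w)]
    have hsecond : 1 / (c * w) < Λ / 2 := by
      rw [div_lt_div_iff₀ (by positivity) two_pos]
      linarith
    linarith

theorem trapped_sphere_criterion_general
    (c A ub1 : ℝ)
    (η : EuclideanSpace ℝ (Fin 2) → ℝ → ℂ)
    (γ2 γ6 : EuclideanSpace ℝ (Fin 2) → ℝ)
    (hc : c ∈ Set.Ioo (0 : ℝ) 1) (hA : 0 < A) (hub1 : ub1 ∈ Set.Ioo (0 : ℝ) 1)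
    (Λ : ℝ)
    (hΛdef : Λ = ⨅ ξ : Metric.ball (0 : EuclideanSpace ℝ (Fin 2)) 4,
        ∫ s in (0 : ℝ)..ub1, Complex.normSq (η ξ.1 s))
    (hΛpos : 0 < Λ)
    (hAsmall : A < (1 / 4) * Real.sqrt c * min 1 Λ)
    (u1 ρ1 : ℝ) (hu1 : u1 = -Λ / (2 * A ^ 2)) (hρ1 : ρ1 = A ^ 2 * ub1 - u1)
    (hγ2 : ∀ ξ ∈ Metric.ball (0 : EuclideanSpace ℝ (Fin 2)) 4,
      |u1 ^ 2 * γ2 ξ - A ^ 2 * u1 ^ 2 / ρ1 + ∫ s in (0 : ℝ)..ub1, Complex.normSq (η ξ s)|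
        ≤ 1 / (c * |u1|))
    (hγ6 : ∀ ξ ∈ Metric.ball (0 : EuclideanSpace ℝ (Fin 2)) 4,
      |u1 ^ 2 * γ6 ξ + u1 ^ 2 / ρ1| ≤ 1 / (c * |u1|)) :
    ∀ ξ ∈ Metric.ball (0 : EuclideanSpace ℝ (Fin 2)) 4, γ2 ξ < 0 ∧ γ6 ξ < 0 := by
  intro ξ hξ
  obtain ⟨hc0, hc1⟩ := hc
  obtain ⟨hub0, hub1⟩ := hub1
  have hΛle : Λ ≤ ∫ s in (0 : ℝ)..ub1, Complex.normSq (η ξ s) := by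
    rw [hΛdef]
    refine ciInf_le ⟨0, ?_⟩ (⟨ξ, hξ⟩ : Metric.ball (0 : EuclideanSpace ℝ (Fin 2)) 4)
    rintro _ ⟨ζ, rfl⟩
    exact intervalIntegral.integral_nonneg hub0.le fun s _ => Complex.normSq_nonneg _
  obtain ⟨hmargin6, hmargin2⟩ := trapping_margins hc0 hc1 hA hub0 hub1 hΛpos hAsmall
  have hu1w : u1 = -(Λ / (2 * A ^ 2)) := by rw [hu1, neg_div]
  have habs : |u1| = Λ / (2 * A ^ 2) := by rw [hu1w, abs_neg, abs_of_pos (by positivity)]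
  have hsq : u1 ^ 2 = (Λ / (2 * A ^ 2)) ^ 2 := by rw [hu1w, neg_sq]
  have hρ : ρ1 = A ^ 2 * ub1 + Λ / (2 * A ^ 2) := by rw [hρ1, hu1w, sub_neg_eq_add]
  have h2 := hγ2 ξ hξ
  rw [sub_add_eq_add_sub, add_sub_assoc] at h2
  refine ⟨neg_of_abs_mul_add_le (sq_nonneg u1) h2 ?_,
    neg_of_abs_mul_add_le (sq_nonneg u1) (hγ6 ξ hξ) ?_⟩
  · rw [habs, hsq, hρ]; linarith
  · rwa [habs, hsq, hρ]

/-- **Trapped sphere criterion.** -/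
theorem trapped_sphere_criterion
    (c A ub1 : ℝ)
    (η : EuclideanSpace ℝ (Fin 2) → ℝ → ℂ)
    (γ2 γ6 : EuclideanSpace ℝ (Fin 2) → ℝ)
    (hc : c ∈ Set.Ioo (0 : ℝ) 1) (hA : 0 < A) (hub1 : ub1 ∈ Set.Ioo (0 : ℝ) 1)
    (hη : ContinuousOn (fun p : EuclideanSpace ℝ (Fin 2) × ℝ => η p.1 p.2)
      (Metric.ball (0 : EuclideanSpace ℝ (Fin 2)) 4 ×ˢ Set.Ioo (0 : ℝ) 1))
    (Λ : ℝ)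
    (hΛdef : Λ = ⨅ ξ : Metric.ball (0 : EuclideanSpace ℝ (Fin 2)) 4,
        ∫ s in (0 : ℝ)..ub1, Complex.normSq (η ξ.1 s))
    (hΛpos : 0 < Λ)
    (hAsmall : A < (1 / 4) * Real.sqrt c * min 1 Λ)
    (u1 ρ1 : ℝ) (hu1 : u1 = -Λ / (2 * A ^ 2)) (hρ1 : ρ1 = A ^ 2 * ub1 - u1)
    (hγ2 : ∀ ξ ∈ Metric.ball (0 : EuclideanSpace ℝ (Fin 2)) 4,
      |u1 ^ 2 * γ2 ξ - A ^ 2 * u1 ^ 2 / ρ1 + ∫ s in (0 : ℝ)..ub1, Complex.normSq (η ξ s)|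
        ≤ 1 / (c * |u1|))
    (hγ6 : ∀ ξ ∈ Metric.ball (0 : EuclideanSpace ℝ (Fin 2)) 4,
      |u1 ^ 2 * γ6 ξ + u1 ^ 2 / ρ1| ≤ 1 / (c * |u1|)) :
    ∀ ξ ∈ Metric.ball (0 : EuclideanSpace ℝ (Fin 2)) 4, γ2 ξ < 0 ∧ γ6 ξ < 0 :=
  trapped_sphere_criterion_general c A ub1 η γ2 γ6 hc hA hub1 Λ hΛdef hΛpos hAsmall u1 ρ1 hu1 hρ1
    hγ2 hγ6
end

section
/- (Doubly scaled Minkowski coordinates) Let a, 𝔄 ∈ ℝ with a ≠ 0 and 𝔄 ≠ 0, let ξ = (ξ¹,ξ²) ∈ ℝ², ū > 0 and u < 0. Set ρ = 𝔄²·ū − u, m = (𝔄²/a²)·|ξ|², X⁰ = (𝔄²·ū + u)/(√2·|𝔄|), and X = (1/(√2·|𝔄|)) · (ρ/(1+m)) · ( 2(𝔄/a)ξ¹, 2(𝔄/a)ξ², −1+m ) ∈ ℝ³. Then: (i) the Euclidean norm satisfies |X| = ρ/(√2·|𝔄|) = (𝔄²ū − u)/(√2·|𝔄|); (ii) u = |𝔄|·(X⁰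 − |X|)/√2 and ū = (X⁰ + |X|)/(√2·|𝔄|); (iii) −(X⁰)² + |X|² = −2·u·ū; (iv) |X⁰| < |X|, and X does not lie on the nonnegative X³-axis {0}×{0}×[0,∞). -/
/-!
`X` is the inverse stereographic image of `w = (𝔄 / a) ξ` scaled to radius `ρ / (√2 |𝔄|)`, since
`|(2w, |w|² - 1)| = 1 + |w|²`; it avoids the nonnegative `X³`-axis because `w = 0` is sent to the
south pole. Then `X⁰ - |X|` and `X⁰ + |X|` are `u` and `ū` up to positive factors, so the remaining
identities are those of null coordinates, and `|X⁰| < |X|` reduces to `u < 0 < ū`.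
-/

open Real

theorem stereographic_point_norm_sq (r w₁ w₂ : ℝ) :
    (r / (1 + (w₁ ^ 2 + w₂ ^ 2)) * (2 * w₁)) ^ 2 + (r / (1 + (w₁ ^ 2 + w₂ ^ 2)) * (2 * w₂)) ^ 2
      + (r / (1 + (w₁ ^ 2 + w₂ ^ 2)) * (-1 + (w₁ ^ 2 + w₂ ^ 2))) ^ 2 = r ^ 2 := by
  have hs : 1 + (w₁ ^ 2 + w₂ ^ 2) ≠ 0 := by positivity
  field_simp
  ring

theorem stereographic_point_not_mem_nonneg_axis {r : ℝ} (hr : 0 < r) (w₁ w₂ : ℝ) :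
    ¬(r / (1 + (w₁ ^ 2 + w₂ ^ 2)) * (2 * w₁) = 0 ∧ r / (1 + (w₁ ^ 2 + w₂ ^ 2)) * (2 * w₂) = 0 ∧
      0 ≤ r / (1 + (w₁ ^ 2 + w₂ ^ 2)) * (-1 + (w₁ ^ 2 + w₂ ^ 2))) := by
  rintro ⟨h₁, h₂, h₃⟩
  have hc : r / (1 + (w₁ ^ 2 + w₂ ^ 2)) ≠ 0 := by positivity
  obtain rfl : w₁ = 0 := by linarith [(mul_eq_zero.mp h₁).resolve_left hc]
  obtain rfl : w₂ = 0 := by linarith [(mul_eq_zero.mp h₂).resolve_left hc]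
  norm_num at h₃
  linarith

section NullCoordinates

variable (A u ub : ℝ)

noncomputable def minkowskiTime : ℝ := (A ^ 2 * ub + u) / (√2 * |A|)

noncomputable def minkowskiRadius : ℝ := (A ^ 2 * ub - u) / (√2 * |A|)

variable {A}

theorem abs_mul_minkowskiTime_sub_minkowskiRadius (hA : A ≠ 0) :
    |A| * (minkowskiTime A u ub - minkowskiRadius A u ub) / √2 = u := by
  unfold minkowskiTime minkowskiRadius
  field_simp
  rw [sq_sqrt zero_le_two]
  ring

theorem minkowskiTime_add_minkowskiRadius_div (hA : A ≠ 0) :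
    (minkowskiTime A u ub + minkowskiRadius A u ub) / (√2 * |A|) = ub := by
  unfold minkowskiTime minkowskiRadius
  field_simp
  rw [sq_sqrt zero_le_two, sq_abs]
  ring

theorem neg_minkowskiTime_sq_add_minkowskiRadius_sq (hA : A ≠ 0) :
    -minkowskiTime A u ub ^ 2 + minkowskiRadius A u ub ^ 2 = -2 * u * ub := by
  unfold minkowskiTime minkowskiRadius
  field_simp
  rw [sq_sqrt zero_le_two, sq_abs]
  ring

theorem abs_minkowskiTime_lt_minkowskiRadius (hA : A ≠ 0) (hub : 0 < ub) (hu : u < 0) :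
    |minkowskiTime A u ub| < minkowskiRadius A u ub := by
  have hk : 0 < √2 * |A| := by positivity
  have hA2 : 0 < A ^ 2 * ub := by positivity
  rw [minkowskiTime, minkowskiRadius, abs_div, abs_of_pos hk]
  gcongr
  exact abs_lt.mpr ⟨by linarith, by linarith⟩

end NullCoordinates

theorem doubly_scaled_minkowski_coordinates_general
    (a A ξ1 ξ2 ub u ρ m X0 X1 X2 X3 : ℝ)
    (hA : A ≠ 0) (hub : 0 < ub) (hu : u < 0)
    (hρ : ρ = A ^ 2 * ub - u)
    (hm : m = (A ^ 2 / a ^ 2) * (ξ1 ^ 2 + ξ2 ^ 2))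
    (hX0 : X0 = (A ^ 2 * ub + u) / (Real.sqrt 2 * |A|))
    (hX1 : X1 = (1 / (Real.sqrt 2 * |A|)) * (ρ / (1 + m)) * (2 * (A / a) * ξ1))
    (hX2 : X2 = (1 / (Real.sqrt 2 * |A|)) * (ρ / (1 + m)) * (2 * (A / a) * ξ2))
    (hX3 : X3 = (1 / (Real.sqrt 2 * |A|)) * (ρ / (1 + m)) * (-1 + m)) :
    Real.sqrt (X1 ^ 2 + X2 ^ 2 + X3 ^ 2) = ρ / (Real.sqrt 2 * |A|) ∧
    u = |A| * (X0 - Real.sqrt (X1 ^ 2 + X2 ^ 2 + X3 ^ 2)) / Real.sqrt 2 ∧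
    ub = (X0 + Real.sqrt (X1 ^ 2 + X2 ^ 2 + X3 ^ 2)) / (Real.sqrt 2 * |A|) ∧
    -X0 ^ 2 + (X1 ^ 2 + X2 ^ 2 + X3 ^ 2) = -2 * u * ub ∧
    |X0| < Real.sqrt (X1 ^ 2 + X2 ^ 2 + X3 ^ 2) ∧
    ¬(X1 = 0 ∧ X2 = 0 ∧ 0 ≤ X3) := by
  have hR : 0 < minkowskiRadius A u ub :=
    (abs_nonneg _).trans_lt (abs_minkowskiTime_lt_minkowskiRadius u ub hA hub hu)
  have hρR : ρ / (√2 * |A|) = minkowskiRadius A u ub := by rw [hρ]; rfl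
  set w₁ := A / a * ξ1
  set w₂ := A / a * ξ2
  have hm' : m = w₁ ^ 2 + w₂ ^ 2 := by rw [hm]; ring
  obtain ⟨rfl, rfl, rfl⟩ :
      X1 = minkowskiRadius A u ub / (1 + (w₁ ^ 2 + w₂ ^ 2)) * (2 * w₁) ∧
      X2 = minkowskiRadius A u ub / (1 + (w₁ ^ 2 + w₂ ^ 2)) * (2 * w₂) ∧
      X3 = minkowskiRadius A u ub / (1 + (w₁ ^ 2 + w₂ ^ 2)) * (-1 + (w₁ ^ 2 + w₂ ^ 2)) := by
    rw [hX1, hX2, hX3, ← hm', ← hρR]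
    exact ⟨by ring, by ring, by ring⟩
  rw [stereographic_point_norm_sq, Real.sqrt_sq hR.le, hρR, show X0 = minkowskiTime A u ub from hX0]
  exact ⟨rfl, (abs_mul_minkowskiTime_sub_minkowskiRadius u ub hA).symm,
    (minkowskiTime_add_minkowskiRadius_div u ub hA).symm,
    neg_minkowskiTime_sq_add_minkowskiRadius_sq u ub hA,
    abs_minkowskiTime_lt_minkowskiRadius u ub hA hub hu,
    stereographic_point_not_mem_nonneg_axis hR w₁ w₂⟩

/-- **Doubly scaled Minkowski coordinates.** -/
theorem doubly_scaled_minkowski_coordinates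
    (a A ξ1 ξ2 ub u ρ m X0 X1 X2 X3 : ℝ)
    (ha : a ≠ 0) (hA : A ≠ 0) (hub : 0 < ub) (hu : u < 0)
    (hρ : ρ = A ^ 2 * ub - u)
    (hm : m = (A ^ 2 / a ^ 2) * (ξ1 ^ 2 + ξ2 ^ 2))
    (hX0 : X0 = (A ^ 2 * ub + u) / (Real.sqrt 2 * |A|))
    (hX1 : X1 = (1 / (Real.sqrt 2 * |A|)) * (ρ / (1 + m)) * (2 * (A / a) * ξ1))
    (hX2 : X2 = (1 / (Real.sqrt 2 * |A|)) * (ρ / (1 + m)) * (2 * (A / a) * ξ2))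
    (hX3 : X3 = (1 / (Real.sqrt 2 * |A|)) * (ρ / (1 + m)) * (-1 + m)) :
    Real.sqrt (X1 ^ 2 + X2 ^ 2 + X3 ^ 2) = ρ / (Real.sqrt 2 * |A|) ∧
    u = |A| * (X0 - Real.sqrt (X1 ^ 2 + X2 ^ 2 + X3 ^ 2)) / Real.sqrt 2 ∧
    ub = (X0 + Real.sqrt (X1 ^ 2 + X2 ^ 2 + X3 ^ 2)) / (Real.sqrt 2 * |A|) ∧
    -X0 ^ 2 + (X1 ^ 2 + X2 ^ 2 + X3 ^ 2) = -2 * u * ub ∧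
    |X0| < Real.sqrt (X1 ^ 2 + X2 ^ 2 + X3 ^ 2) ∧
    ¬(X1 = 0 ∧ X2 = 0 ∧ 0 ≤ X3) :=
  doubly_scaled_minkowski_coordinates_general a A ξ1 ξ2 ub u ρ m X0 X1 X2 X3 hA hub hu hρ hm hX0 hX1
    hX2 hX3
end
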